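/- arXiv:2508.07347 — 5 statements merged into one kernel-verified Lean document; each statement's English description precedes it below -/
import Mathlib

section
/- Let S be a maximal triangular subalgebra of B(H) and let p ∈ lat(S). Then p b (1 − p) ∈ S for every b ∈ B(H); that is, p B(H) p⊥ ⊆ S. -/
/-!
Since `p ∈ lat S`, the relations `a p = p a p` and `a* p = p a* p` for `a` in the diagonal
`S ∩ S*` show that `p` commutes with the diagonal, so `p ∈ S ∩ S*` by maximal abelianness.
Because `p⊥ S p = 0` and `p⊥ p = 0`, the space `S + p B(H) p⊥` is again an algebra, and its
diagonal is still `S ∩ S*`: if `t = a + p b p⊥` and `t*` both lie in it, then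
`p t p⊥ = (p⊥ t* p)* = 0`, whence `p b p⊥ = -p a p⊥ ∈ S` and `t ∈ S`. So `S + p B(H) p⊥` is
triangular and contains `S`; by maximality it equals `S`.
-/

set_option maxHeartbeats 1000000
set_option synthInstance.maxHeartbeats 400000

open ContinuousLinearMap in
/-- The diagonal `S ∩ S*` of a subalgebra of `B(H)`. -/
def diagonal {H : Type*} [NormedAddCommGroup H] [InnerProductSpace ℂ H] [CompleteSpace H]
    (S : Subalgebra ℂ (H →L[ℂ] H)) : Set (H →L[ℂ] H) :=
  {a | a ∈ S ∧ adjoint a ∈ S}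

/-- A set of operators is maximal abelian in `B(H)` if it is commutative and contains
every operator commuting with all of its members. -/
def IsMaxAbelian {H : Type*} [NormedAddCommGroup H] [InnerProductSpace ℂ H]
    (D : Set (H →L[ℂ] H)) : Prop :=
  (∀ a ∈ D, ∀ b ∈ D, a * b = b * a) ∧
  (∀ b : H →L[ℂ] H, (∀ a ∈ D, a * b = b * a) → b ∈ D)

/-- A (unital) subalgebra of `B(H)` is triangular if its diagonal `S ∩ S*` is
maximal abelian in `B(H)`. -/
def IsTriangular {H : Type*} [NormedAddCommGroup H] [InnerProductSpace ℂ H] [CompleteSpace H]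
    (S : Subalgebra ℂ (H →L[ℂ] H)) : Prop :=
  IsMaxAbelian (diagonal S)

/-- `S` is maximal triangular if it is triangular and not properly contained in any
other triangular subalgebra. -/
def IsMaxTriangular {H : Type*} [NormedAddCommGroup H] [InnerProductSpace ℂ H] [CompleteSpace H]
    (S : Subalgebra ℂ (H →L[ℂ] H)) : Prop :=
  IsTriangular S ∧ ∀ T : Subalgebra ℂ (H →L[ℂ] H), IsTriangular T → S ≤ T → S = T

open ContinuousLinearMap in
/-- `p ∈ lat S`: `p` is an orthogonal projection with `a p = p a p` for all `a ∈ S`. -/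
def InLat {H : Type*} [NormedAddCommGroup H] [InnerProductSpace ℂ H] [CompleteSpace H]
    (S : Subalgebra ℂ (H →L[ℂ] H)) (p : H →L[ℂ] H) : Prop :=
  p * p = p ∧ adjoint p = p ∧ ∀ a ∈ S, a * p = p * a * p


section Corner

variable {A : Type*} [Ring A] {p a : A}

lemma one_sub_mul_mul_eq_zero_of_mul_eq (h : a * p = p * a * p) : (1 - p) * a * p = 0 := by
  rw [sub_mul, sub_mul, one_mul, ← h, sub_self]

lemma one_sub_mul_eq_of_mul_eq (h : a * p = p * a * p) : (1 - p) * a = (1 - p) * a * (1 - p) := by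
  rw [mul_sub, mul_one, one_sub_mul_mul_eq_zero_of_mul_eq h, sub_zero]

lemma commute_of_mul_eq_of_star_mul_eq [StarRing A] (hp : IsSelfAdjoint p)
    (h : a * p = p * a * p) (h' : star a * p = p * star a * p) : Commute a p := by
  have : p * a = p * a * p := by simpa [star_mul, hp.star_eq, mul_assoc] using congrArg star h'
  rw [Commute, SemiconjBy, h, ← this]

end Corner

namespace Subalgebra

variable {R A : Type*} [CommRing R] [Ring A] [Algebra R A] {S : Subalgebra R A} {p : A}

/-- `S + p A p⊥`. -/
def addCorner (S : Subalgebra R A) (hp : IsIdempotentElem p)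
    (hlat : ∀ a ∈ S, a * p = p * a * p) : Subalgebra R A where
  carrier := {t | ∃ a ∈ S, ∃ b, t = a + p * b * (1 - p)}
  mul_mem' := by
    rintro _ _ ⟨a, ha, b, rfl⟩ ⟨c, hc, d, rfl⟩
    refine ⟨a * c, mul_mem ha hc, a * p * d + b * (1 - p) * c, ?_⟩
    have hqp : (1 - p) * p = 0 := hp.one_sub_mul_self
    have hc' := one_sub_mul_eq_of_mul_eq (hlat c hc)
    calc (a + p * b * (1 - p)) * (c + p * d * (1 - p))
        = a * c + (a * p) * d * (1 - p) + p * b * ((1 - p) * c)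
          + p * b * ((1 - p) * p) * d * (1 - p) := by noncomm_ring
      _ = a * c + (p * a * p) * d * (1 - p) + p * b * ((1 - p) * c * (1 - p))
          + p * b * 0 * d * (1 - p) := by rw [← hlat a ha, ← hc', hqp]
      _ = a * c + p * (a * p * d + b * (1 - p) * c) * (1 - p) := by noncomm_ring
  add_mem' := by
    rintro _ _ ⟨a, ha, b, rfl⟩ ⟨c, hc, d, rfl⟩
    exact ⟨a + c, add_mem ha hc, b + d, by noncomm_ring⟩
  algebraMap_mem' r := ⟨algebraMap R A r, S.algebraMap_mem r, 0, by simp⟩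

variable {hp : IsIdempotentElem p} {hlat : ∀ a ∈ S, a * p = p * a * p}

lemma le_addCorner : S ≤ S.addCorner hp hlat :=
  fun a ha ↦ ⟨a, ha, 0, by simp⟩

lemma mul_mul_one_sub_mem_addCorner (b : A) : p * b * (1 - p) ∈ S.addCorner hp hlat :=
  ⟨0, zero_mem S, b, by simp⟩

lemma one_sub_mul_mul_eq_zero_of_mem_addCorner {t : A} (ht : t ∈ S.addCorner hp hlat) :
    (1 - p) * t * p = 0 := by
  obtain ⟨a, ha, b, rfl⟩ := ht
  have hqp : (1 - p) * p = 0 := hp.one_sub_mul_self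
  calc (1 - p) * (a + p * b * (1 - p)) * p
      = (1 - p) * a * p + ((1 - p) * p) * b * ((1 - p) * p) := by noncomm_ring
    _ = 0 := by rw [one_sub_mul_mul_eq_zero_of_mul_eq (hlat a ha), hqp]; simp

lemma mem_of_mem_addCorner_of_star_mem [StarRing A] (hp_sa : IsSelfAdjoint p)
    (hpS : p ∈ S) {t : A} (ht : t ∈ S.addCorner hp hlat) (ht' : star t ∈ S.addCorner hp hlat) :
    t ∈ S := by
  have hcorner : p * t * (1 - p) = 0 := by
    simpa [star_mul, hp_sa.star_eq, mul_assoc] using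
      congrArg star (one_sub_mul_mul_eq_zero_of_mem_addCorner ht')
  obtain ⟨a, ha, b, rfl⟩ := ht
  have hsplit : p * (a + p * b * (1 - p)) * (1 - p) = p * a * (1 - p) + p * b * (1 - p) :=
    calc _ = p * a * (1 - p) + (p * p) * b * ((1 - p) * (1 - p)) := by noncomm_ring
      _ = _ := by rw [hp.eq, hp.one_sub.eq]
  rw [hsplit] at hcorner
  rw [eq_neg_of_add_eq_zero_right hcorner]
  exact add_mem ha (neg_mem (mul_mem (mul_mem hpS ha) (sub_mem (one_mem S) hpS)))

end Subalgebra

section Operators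

open ContinuousLinearMap

variable {H : Type*} [NormedAddCommGroup H] [InnerProductSpace ℂ H] [CompleteSpace H]
  {S : Subalgebra ℂ (H →L[ℂ] H)} {p : H →L[ℂ] H}

lemma InLat.isIdempotentElem (hp : InLat S p) : IsIdempotentElem p := hp.1

lemma InLat.isSelfAdjoint (hp : InLat S p) : IsSelfAdjoint p := isSelfAdjoint_iff'.mpr hp.2.1

lemma InLat.mem_diagonal (hS : IsTriangular S) (hp : InLat S p) : p ∈ diagonal S :=
  hS.2 p fun a ha ↦ commute_of_mul_eq_of_star_mul_eq hp.isSelfAdjoint (hp.2.2 a ha.1)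
    (by simpa only [star_eq_adjoint] using hp.2.2 _ ha.2)

lemma InLat.diagonal_addCorner (hS : IsTriangular S) (hp : InLat S p) :
    diagonal (S.addCorner hp.isIdempotentElem hp.2.2) = diagonal S := by
  have hpS : p ∈ S := (hp.mem_diagonal hS).1
  ext t
  simp only [diagonal, Set.mem_ofPred_eq, ← star_eq_adjoint]
  constructor
  · rintro ⟨ht, ht'⟩
    exact ⟨Subalgebra.mem_of_mem_addCorner_of_star_mem hp.isSelfAdjoint hpS ht ht',
      Subalgebra.mem_of_mem_addCorner_of_star_mem hp.isSelfAdjoint hpS ht' (by rwa [star_star])⟩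
  · rintro ⟨ht, ht'⟩
    exact ⟨Subalgebra.le_addCorner ht, Subalgebra.le_addCorner ht'⟩

end Operators

/-- If `S` is maximal triangular and `p ∈ lat(S)` then `p B(H) p⊥ ⊆ S`. -/
theorem pBHpperp_subset {H : Type*} [NormedAddCommGroup H] [InnerProductSpace ℂ H]
    [CompleteSpace H] {S : Subalgebra ℂ (H →L[ℂ] H)} (hS : IsMaxTriangular S)
    {p : H →L[ℂ] H} (hp : InLat S p) (b : H →L[ℂ] H) :
    p * b * (1 - p) ∈ S := by
  obtain ⟨hS_tri, hS_max⟩ := hS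
  have hT : IsTriangular (S.addCorner hp.isIdempotentElem hp.2.2) := by
    rw [IsTriangular, hp.diagonal_addCorner hS_tri]
    exact hS_tri
  rw [hS_max _ hT Subalgebra.le_addCorner]
  exact Subalgebra.mul_mul_one_sub_mem_addCorner b
end

section
/- Let S be a maximal triangular subalgebra of B(H). Then the commutant of S is trivial: every b ∈ B(H) satisfying b a = a b for all a ∈ S is a complex scalar multiple of the identity operator. -/
set_option maxHeartbeats 1000000
set_option synthInstance.maxHeartbeats 400000

/-!
If `e` is a projection commuting with `S`, then `S + (1 - e) B(H) e` is again an algebra, with the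
same diagonal as `S`; by maximality it equals `S`. The corners `(1 - e) x e` then lie in the
diagonal, so they commute with `e`, which forces them to vanish: `e = 0` or `e = 1`.
If a self-adjoint `c` commuting with `S` had two points in its spectrum, continuous functional
calculus would give `f(c), g(c) ≠ 0` with `g(c) f(c) = 0`, and the projection onto `ker g(c)` would
be a nontrivial projection commuting with `S`; so `c` is scalar.
Finally, an operator `b` commuting with `S` lies in the maximal abelian diagonal together with
`b*`, so it is normal, and by Fuglede's theorem `b*` commutes with `S` as well. Hence the real and
imaginary parts of `b` commute with `S` and are scalars.
-/

namespace IsIdempotentElem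

variable {A : Type*} [Ring A] {e : A}

theorem one_sub_mul_mul_eq_zero_of_commute (he : IsIdempotentElem e) {s : A}
    (h : Commute e s) : (1 - e) * s * e = 0 := by
  rw [mul_assoc, ← h.eq, ← mul_assoc, he.one_sub_mul_self, zero_mul]

theorem one_sub_mul_add_mul_eq_of_commute (he : IsIdempotentElem e) {s : A} (h : Commute e s)
    (x : A) : (1 - e) * (s + (1 - e) * x * e) * e = (1 - e) * x * e := by
  have hcorner : (1 - e) * ((1 - e) * x * e) * e = (1 - e) * x * e := by
    rw [← mul_assoc, ← mul_assoc, he.one_sub.eq, mul_assoc, he.eq]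
  rw [mul_add, add_mul, he.one_sub_mul_mul_eq_zero_of_commute h, hcorner, zero_add]

end IsIdempotentElem

namespace Subalgebra

variable {R A : Type*} [CommSemiring R] [Ring A] [Algebra R A] {e : A}

def cornerExtension (S : Subalgebra R A) (he : IsIdempotentElem e)
    (hS : ∀ s ∈ S, Commute e s) : Subalgebra R A where
  carrier := {t | ∃ s ∈ S, ∃ x, t = s + (1 - e) * x * e}
  mul_mem' := by
    rintro _ _ ⟨s, hs, x, rfl⟩ ⟨s', hs', y, rfl⟩
    have hleft : s * ((1 - e) * y * e) = (1 - e) * (s * y) * e := by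
      rw [← mul_assoc, ← mul_assoc, ← ((Commute.one_left s).sub_left (hS s hs)).eq,
        mul_assoc (1 - e)]
    have hright : (1 - e) * x * e * s' = (1 - e) * (x * s') * e := by
      rw [mul_assoc, (hS s' hs').eq, ← mul_assoc, mul_assoc (1 - e)]
    have hcorner : (1 - e) * x * e * ((1 - e) * y * e) = 0 := by
      rw [show (1 - e) * x * e * ((1 - e) * y * e) = (1 - e) * x * (e * (1 - e)) * y * e by
        noncomm_ring, he.mul_one_sub_self, mul_zero, zero_mul, zero_mul]
    refine ⟨s * s', mul_mem hs hs', s * y + x * s', ?_⟩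
    calc (s + (1 - e) * x * e) * (s' + (1 - e) * y * e)
        = s * s' + s * ((1 - e) * y * e) + (1 - e) * x * e * s'
          + (1 - e) * x * e * ((1 - e) * y * e) := by noncomm_ring
      _ = s * s' + (1 - e) * (s * y + x * s') * e := by
        rw [hleft, hright, hcorner]; noncomm_ring
  add_mem' := by
    rintro _ _ ⟨s, hs, x, rfl⟩ ⟨s', hs', y, rfl⟩
    exact ⟨s + s', add_mem hs hs', x + y, by noncomm_ring⟩
  algebraMap_mem' r := ⟨_, S.algebraMap_mem r, 0, by simp⟩

variable {S : Subalgebra R A}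

theorem le_cornerExtension (he : IsIdempotentElem e) (hS : ∀ s ∈ S, Commute e s) :
    S ≤ S.cornerExtension he hS :=
  fun s hs ↦ ⟨s, hs, 0, by simp⟩

theorem one_sub_mul_mul_mem_cornerExtension (he : IsIdempotentElem e)
    (hS : ∀ s ∈ S, Commute e s) (x : A) : (1 - e) * x * e ∈ S.cornerExtension he hS :=
  ⟨0, zero_mem S, x, (zero_add _).symm⟩

theorem mem_of_mem_cornerExtension_of_star_mem [StarRing A] (he : IsStarProjection e)
    (hS : ∀ s ∈ S, Commute e s) {t : A} (ht : t ∈ S.cornerExtension he.isIdempotentElem hS)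
    (ht' : star t ∈ S.cornerExtension he.isIdempotentElem hS) : t ∈ S := by
  obtain ⟨s, hs, x, rfl⟩ := ht
  obtain ⟨s', hs', y, hst⟩ := ht'
  have hes : Commute e (star s) := by simpa [he.isSelfAdjoint.star_eq] using (hS s hs).star_star
  have hstar : star (s + (1 - e) * x * e) = star s + e * star x * (1 - e) := by
    simp [star_mul, he.isSelfAdjoint.star_eq, mul_assoc]
  -- `star t` has no `(1 - e) _ e` corner, so `star t = s'` commutes with `e`, and so does `t`.
  have hy : (1 - e) * y * e = 0 := by
    rw [← he.isIdempotentElem.one_sub_mul_add_mul_eq_of_commute (hS s' hs'), ← hst, hstar,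
      mul_add, add_mul, he.isIdempotentElem.one_sub_mul_mul_eq_zero_of_commute hes,
      show (1 - e) * (e * star x * (1 - e)) * e = (1 - e) * e * star x * ((1 - e) * e) by
        noncomm_ring, he.isIdempotentElem.one_sub_mul_self, zero_mul, zero_mul, zero_add]
  have het : Commute e (s + (1 - e) * x * e) := by
    have : Commute e (star (s + (1 - e) * x * e)) := by
      rw [hst, hy, add_zero]; exact hS s' hs'
    simpa [he.isSelfAdjoint.star_eq] using this.star_star
  have hx : (1 - e) * x * e = 0 := by
    rw [← he.isIdempotentElem.one_sub_mul_add_mul_eq_of_commute (hS s hs),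
      he.isIdempotentElem.one_sub_mul_mul_eq_zero_of_commute het]
  rwa [hx, add_zero]

end Subalgebra

theorem ContinuousLinearMap.eq_zero_or_eq_zero_of_forall_mul_mul_eq_zero {R V : Type*} [Field R]
    [TopologicalSpace R] [AddCommGroup V] [TopologicalSpace V] [Module R V] [ContinuousSMul R V]
    [SeparatingDual R V] {p q : V →L[R] V} (h : ∀ x, p * x * q = 0) : p = 0 ∨ q = 0 := by
  by_contra! hpq
  obtain ⟨v, hv⟩ : ∃ v, q v ≠ 0 := by simpa [ContinuousLinearMap.ext_iff] using hpq.2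
  obtain ⟨w, hw⟩ : ∃ w, p w ≠ 0 := by simpa [ContinuousLinearMap.ext_iff] using hpq.1
  obtain ⟨f, hf⟩ := SeparatingDual.exists_ne_zero (R := R) hv
  have : f (q v) • p w = 0 := by simpa using congr($(h (f.smulRight w)) v)
  exact (smul_ne_zero hf hw) this

theorem Submodule.commute_starProjection_of_mem_invtSubmodule {𝕜 E : Type*} [RCLike 𝕜]
    [NormedAddCommGroup E] [InnerProductSpace 𝕜 E] [CompleteSpace E] (U : Submodule 𝕜 E)
    [U.HasOrthogonalProjection] {a : E →L[𝕜] E} (h : U ∈ Module.End.invtSubmodule a.toLinearMap)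
    (h' : U ∈ Module.End.invtSubmodule (ContinuousLinearMap.adjoint a).toLinearMap) :
    Commute U.starProjection a := by
  rw [ContinuousLinearMap.IsIdempotentElem.commute_iff U.isIdempotentElem_starProjection,
    Submodule.range_starProjection, Submodule.ker_starProjection]
  exact ⟨h, ContinuousLinearMap.orthogonal_mem_invtSubmodule h'⟩

theorem LinearMap.ker_mem_invtSubmodule_of_commute {R M : Type*} [Semiring R] [AddCommMonoid M]
    [Module R M] {q a : Module.End R M} (h : Commute q a) :
    LinearMap.ker q ∈ Module.End.invtSubmodule a := by
  intro v hv
  simp only [Submodule.mem_comap, LinearMap.mem_ker] at hv ⊢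
  rw [← Module.End.mul_apply, h.eq, Module.End.mul_apply, hv, map_zero]

theorem IsSelfAdjoint.exists_cfc_ne_zero_mul_eq_zero {A : Type*} [Ring A] [StarRing A]
    [Algebra ℝ A] [TopologicalSpace A] [ContinuousFunctionalCalculus ℝ A IsSelfAdjoint]
    {a : A} (ha : IsSelfAdjoint a) {x y : ℝ} (hx : x ∈ spectrum ℝ a) (hy : y ∈ spectrum ℝ a)
    (hxy : x < y) : ∃ f g : ℝ → ℝ, cfc f a ≠ 0 ∧ cfc g a ≠ 0 ∧ cfc g a * cfc f a = 0 := by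
  obtain ⟨m, hxm, hmy⟩ := exists_between hxy
  refine ⟨fun t ↦ max (m - t) 0, fun t ↦ max (t - m) 0, ?_, ?_, ?_⟩
  · intro h
    have := eqOn_of_cfc_eq_cfc (h.trans (cfc_zero ℝ a).symm) (by fun_prop) (by fun_prop) ha hx
    simp only [Pi.zero_apply, max_eq_right_iff, sub_nonpos] at this
    linarith
  · intro h
    have := eqOn_of_cfc_eq_cfc (h.trans (cfc_zero ℝ a).symm) (by fun_prop) (by fun_prop) ha hy
    simp only [Pi.zero_apply, max_eq_right_iff, sub_nonpos] at this
    linarith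
  · rw [← cfc_mul .., ← cfc_zero ℝ a]
    refine cfc_congr fun t _ ↦ ?_
    rcases le_total t m with h | h <;> simp [h]

section Triangular

open ContinuousLinearMap

variable {H : Type*} [NormedAddCommGroup H] [InnerProductSpace ℂ H] [CompleteSpace H]
  {S : Subalgebra ℂ (H →L[ℂ] H)}

theorem mem_diagonal_iff {a : H →L[ℂ] H} : a ∈ diagonal S ↔ a ∈ S ∧ star a ∈ S := Iff.rfl

theorem star_mem_diagonal {a : H →L[ℂ] H} (ha : a ∈ diagonal S) : star a ∈ diagonal S :=
  mem_diagonal_iff.2 ⟨ha.2, (star_star a).symm ▸ ha.1⟩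

theorem IsTriangular.mem_diagonal_of_commute (hS : IsTriangular S) {b : H →L[ℂ] H}
    (hb : ∀ a ∈ S, Commute b a) : b ∈ diagonal S :=
  hS.2 b fun a ha ↦ (hb a ha.1).eq.symm

theorem IsTriangular.commute_star_of_commute (hS : IsTriangular S) {b : H →L[ℂ] H}
    (hb : ∀ a ∈ S, Commute b a) (a : H →L[ℂ] H) (ha : a ∈ S) : Commute (star b) a :=
  have hbD := hS.mem_diagonal_of_commute hb
  have : IsStarNormal b := ⟨hS.1 _ (star_mem_diagonal hbD) b hbD⟩
  this.commute_star_left (hb a ha)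

theorem diagonal_cornerExtension {e : H →L[ℂ] H} (he : IsStarProjection e)
    (hS : ∀ s ∈ S, Commute e s) :
    diagonal (S.cornerExtension he.isIdempotentElem hS) = diagonal S := by
  ext t
  refine ⟨fun ⟨ht, ht'⟩ ↦ ?_, fun ⟨ht, ht'⟩ ↦
    ⟨S.le_cornerExtension _ hS ht, S.le_cornerExtension _ hS ht'⟩⟩
  rw [← star_eq_adjoint] at ht'
  rw [mem_diagonal_iff]
  refine ⟨S.mem_of_mem_cornerExtension_of_star_mem he hS ht ht', ?_⟩
  exact S.mem_of_mem_cornerExtension_of_star_mem he hS ht' (by rwa [star_star])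

theorem IsMaxTriangular.one_sub_mul_mul_mem (hS : IsMaxTriangular S) {e : H →L[ℂ] H}
    (he : IsStarProjection e) (heS : ∀ s ∈ S, Commute e s) (x : H →L[ℂ] H) :
    (1 - e) * x * e ∈ S := by
  have hT : IsTriangular (S.cornerExtension he.isIdempotentElem heS) := by
    rw [IsTriangular, diagonal_cornerExtension he heS]
    exact hS.1
  rw [hS.2 _ hT (S.le_cornerExtension _ heS)]
  exact S.one_sub_mul_mul_mem_cornerExtension _ heS x

theorem IsMaxTriangular.eq_zero_or_eq_one_of_isStarProjection (hS : IsMaxTriangular S)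
    {e : H →L[ℂ] H} (he : IsStarProjection e) (heS : ∀ s ∈ S, Commute e s) : e = 0 ∨ e = 1 := by
  have heS' : ∀ s ∈ S, Commute (1 - e) s := fun s hs ↦ (Commute.one_left s).sub_left (heS s hs)
  have heD : e ∈ diagonal S := hS.1.mem_diagonal_of_commute heS
  have hcorner : ∀ x, (1 - e) * x * e = 0 := by
    intro x
    have hxD : (1 - e) * x * e ∈ diagonal S := by
      refine ⟨hS.one_sub_mul_mul_mem he heS x, ?_⟩
      have := hS.one_sub_mul_mul_mem he.one_sub heS' (star x)
      rw [sub_sub_cancel] at this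
      convert this using 1
      rw [← star_eq_adjoint, star_mul, star_mul, he.isSelfAdjoint.star_eq, star_sub, star_one,
        he.isSelfAdjoint.star_eq, ← mul_assoc]
    calc (1 - e) * x * e = (1 - e) * x * e * e := by rw [mul_assoc _ e e, he.isIdempotentElem.eq]
      _ = e * ((1 - e) * x * e) := hS.1.1 _ hxD e heD
      _ = 0 := by rw [← mul_assoc, ← mul_assoc, he.isIdempotentElem.mul_one_sub_self, zero_mul,
        zero_mul]
  rcases eq_zero_or_eq_zero_of_forall_mul_mul_eq_zero hcorner with h | h
  · exact Or.inr (sub_eq_zero.mp h).symm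
  · exact Or.inl h

theorem IsMaxTriangular.spectrum_subsingleton (hS : IsMaxTriangular S) {c : H →L[ℂ] H}
    (hc : IsSelfAdjoint c) (hcS : ∀ a ∈ S, Commute c a) : (spectrum ℝ c).Subsingleton := by
  suffices h : ∀ x ∈ spectrum ℝ c, ∀ y ∈ spectrum ℝ c, ¬x < y from
    fun x hx y hy ↦ le_antisymm (not_lt.1 (h y hy x hx)) (not_lt.1 (h x hx y hy))
  intro x hx y hy hxy
  obtain ⟨f, g, hf, hg, hgf⟩ := hc.exists_cfc_ne_zero_mul_eq_zero hx hy hxy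
  set K := (cfc g c).ker
  have heS : ∀ a ∈ S, Commute K.starProjection a := by
    intro a ha
    have hac : Commute c (adjoint a) := by
      simpa [hc.star_eq, star_eq_adjoint] using (hcS a ha).star_star
    exact K.commute_starProjection_of_mem_invtSubmodule
      (LinearMap.ker_mem_invtSubmodule_of_commute
        (((hcS a ha).cfc_real g).map ContinuousLinearMap.toLinearMapRingHom))
      (LinearMap.ker_mem_invtSubmodule_of_commute
        ((hac.cfc_real g).map ContinuousLinearMap.toLinearMapRingHom))
  rcases hS.eq_zero_or_eq_one_of_isStarProjection isStarProjection_starProjection heS with he | he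
  · refine hf (ContinuousLinearMap.ext fun v ↦ ?_)
    have hv : cfc f c v ∈ K := congr($hgf v)
    rw [← K.starProjection_eq_self_iff.mpr hv, he]
    rfl
  · refine hg (ContinuousLinearMap.ext fun v ↦ ?_)
    exact K.starProjection_eq_self_iff.mp (by rw [he]; rfl)

theorem IsMaxTriangular.exists_eq_algebraMap_of_isSelfAdjoint (hS : IsMaxTriangular S)
    {c : H →L[ℂ] H} (hc : IsSelfAdjoint c) (hcS : ∀ a ∈ S, Commute c a) :
    ∃ r : ℝ, c = algebraMap ℝ (H →L[ℂ] H) r := by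
  obtain ⟨r, hr⟩ : ∃ r, spectrum ℝ c ⊆ {r} := by
    rcases (hS.spectrum_subsingleton hc hcS).eq_empty_or_singleton with h | ⟨r, h⟩
    · exact ⟨0, h ▸ Set.empty_subset _⟩
    · exact ⟨r, h.le⟩
  exact ⟨r, CFC.eq_algebraMap_of_spectrum_subset_singleton c r hr⟩

end Triangular

/-- The commutant of a maximal triangular subalgebra is trivial: any `b` commuting with
every element of `S` is a scalar multiple of the identity. -/
theorem commutant_trivial {H : Type*} [NormedAddCommGroup H] [InnerProductSpace ℂ H]
    [CompleteSpace H] {S : Subalgebra ℂ (H →L[ℂ] H)} (hS : IsMaxTriangular S)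
    (b : H →L[ℂ] H) (hb : ∀ a ∈ S, b * a = a * b) :
    ∃ α : ℂ, b = α • (1 : H →L[ℂ] H) := by
  have hb' : ∀ a ∈ S, Commute b a := hb
  have hb_star := hS.1.commute_star_of_commute hb'
  obtain ⟨x, hx⟩ := hS.exists_eq_algebraMap_of_isSelfAdjoint (realPart b).2 fun a ha ↦ by
    rw [realPart_apply_coe]
    exact ((hb' a ha).add_left (hb_star a ha)).smul_left _
  obtain ⟨y, hy⟩ := hS.exists_eq_algebraMap_of_isSelfAdjoint (imaginaryPart b).2 fun a ha ↦ by
    rw [imaginaryPart_apply_coe]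
    exact (((hb' a ha).sub_left (hb_star a ha)).smul_left _).smul_left _
  refine ⟨x + Complex.I * y, ?_⟩
  rw [← realPart_add_I_smul_imaginaryPart b, hx, hy, Algebra.algebraMap_eq_smul_one,
    Algebra.algebraMap_eq_smul_one, ← Complex.coe_smul, ← Complex.coe_smul, smul_smul, add_smul]
end

section
/- Let S be a maximal triangular subalgebra of B(H), let δ : S → B(H) be a bounded derivation, and let p ∈ lat(S) with p ≠ 0 and p ≠ 1. Then there exists b₁ ∈ B(H) such that b₁ (1 − p) = 0, ‖b₁‖ ≤ ‖δ‖, and δ(a) p = (b₁ a − a b₁) p for all a ∈ S. -/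
set_option maxHeartbeats 1000000
set_option synthInstance.maxHeartbeats 400000

/-- A bounded derivation from `S` into `B(H)`: a continuous linear map obeying the
Leibniz product rule on `S`. -/
def IsDerivation {H : Type*} [NormedAddCommGroup H] [InnerProductSpace ℂ H] [CompleteSpace H]
    (S : Subalgebra ℂ (H →L[ℂ] H)) (δ : S →L[ℂ] (H →L[ℂ] H)) : Prop :=
  ∀ a b : S, δ (a * b) = δ a * (b : H →L[ℂ] H) + (a : H →L[ℂ] H) * δ b

/-!
Since `p ∈ lat S`, `p` commutes with the diagonal of `S`, which is maximal abelian, so `p` lies in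
the diagonal. Then `S + p B(H) (1 - p)` is an algebra with the same diagonal as `S`, hence
triangular, and maximality gives `p B(H) (1 - p) ⊆ S`. In particular, for a unit vector `f` with
`p f = 0`, every rank-one operator `x ⊗ f` with `x ∈ ran p` lies in `S`, and
`b₁ z := δ(p z ⊗ f) f` works: the Leibniz rule applied to `a (p z ⊗ f) = (a p z) ⊗ f` and
evaluated at `f` reads `b₁ a p z = δ(a) p z + a b₁ p z`.
-/

namespace Subalgebra

variable {R A : Type*} [CommRing R] [Ring A] [Algebra R A] (S : Subalgebra R A) {p : A}

/-- For `p ∈ lat S` this is `S + p A (1 - p)`. -/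
def extendCorner (hp : IsIdempotentElem p) : Subalgebra R A where
  carrier := {a | (1 - p) * a * p = 0 ∧ a - p * a * (1 - p) ∈ S}
  mul_mem' {a b} := by
    rintro ⟨ha, ha'⟩ ⟨hb, hb'⟩
    have hpp : ∀ x, p * (p * x) = p * x := fun x => by rw [← mul_assoc, hp.eq]
    have hlow : (1 - p) * (a * b) * p
        = (1 - p) * a * p * (b * p) + (1 - p) * a * ((1 - p) * b * p) := by
      noncomm_ring
    have hdiag : a * b - p * (a * b) * (1 - p) = (a - p * a * (1 - p)) * (b - p * b * (1 - p))
        + (1 - p) * a * p * b * (1 - p) + p * a * ((1 - p) * b * p) := by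
      simp only [mul_sub, sub_mul, one_mul, mul_one, mul_assoc, hpp]
      abel
    refine ⟨by rw [hlow, ha, hb]; simp, ?_⟩
    rw [hdiag, ha, hb]
    simpa using S.mul_mem ha' hb'
  add_mem' {a b} := by
    rintro ⟨ha, ha'⟩ ⟨hb, hb'⟩
    refine ⟨by rw [mul_add, add_mul, ha, hb, add_zero], ?_⟩
    convert S.add_mem ha' hb' using 1
    noncomm_ring
  algebraMap_mem' r := by
    have hpq : p * (1 - p) = 0 := hp.mul_one_sub_self
    have hqp : (1 - p) * p = 0 := hp.one_sub_mul_self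
    simp only [Set.mem_ofPred_eq, Algebra.algebraMap_eq_smul_one, mul_smul_comm, smul_mul_assoc,
      mul_one, hpq, hqp, smul_zero, sub_zero]
    exact ⟨trivial, S.smul_mem S.one_mem r⟩

variable {S} {hp : IsIdempotentElem p} {a : A}

lemma le_extendCorner (hpS : p ∈ S) (hS : ∀ a ∈ S, (1 - p) * a * p = 0) :
    S ≤ S.extendCorner hp :=
  fun a ha => ⟨hS a ha, S.sub_mem ha (S.mul_mem (S.mul_mem hpS ha) (S.sub_mem S.one_mem hpS))⟩

lemma mem_extendCorner_of_mul_eq_zero (h₁ : (1 - p) * a = 0) (h₂ : a * p = 0) :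
    a ∈ S.extendCorner hp := by
  have : p * a = a := by rwa [sub_mul, one_mul, sub_eq_zero, eq_comm] at h₁
  refine ⟨by rw [h₁, zero_mul], ?_⟩
  rw [this, mul_sub, mul_one, h₂, sub_zero, sub_self]
  exact S.zero_mem

lemma mem_of_mem_extendCorner (ha : a ∈ S.extendCorner hp) (h : p * a * (1 - p) = 0) :
    a ∈ S := by
  simpa [h] using ha.2

end Subalgebra

open ContinuousLinearMap InnerProductSpace

lemma IsSelfAdjoint.mul_mul_one_sub_eq_zero {R : Type*} [Ring R] [StarRing R] {p a : R}
    (hp : IsSelfAdjoint p) (h : (1 - p) * star a * p = 0) : p * a * (1 - p) = 0 := by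
  simpa [star_sub, hp.star_eq, mul_assoc] using congrArg star h

section Triangular

variable {H : Type*} [NormedAddCommGroup H] [InnerProductSpace ℂ H] [CompleteSpace H]
  {S : Subalgebra ℂ (H →L[ℂ] H)} {p : H →L[ℂ] H}

namespace InLat

lemma isIdempotentElem_s11 (hp : InLat S p) : IsIdempotentElem p := hp.1

lemma isStarProjection (hp : InLat S p) : IsStarProjection p :=
  ⟨hp.1, by rw [IsSelfAdjoint, star_eq_adjoint, hp.2.1]⟩

lemma one_sub_mul_mul_eq_zero (hp : InLat S p) {a : H →L[ℂ] H} (ha : a ∈ S) :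
    (1 - p) * a * p = 0 := by
  rw [sub_mul, sub_mul, one_mul, hp.2.2 a ha, sub_self]

lemma mem_diagonal_s11 (hS : IsTriangular S) (hp : InLat S p) : p ∈ diagonal S := by
  refine hS.2 p fun d hd => ?_
  have h₁ := hp.one_sub_mul_mul_eq_zero hd.1
  have h₂ := hp.isStarProjection.isSelfAdjoint.mul_mul_one_sub_eq_zero
    (hp.one_sub_mul_mul_eq_zero hd.2)
  calc d * p = p * d * p + (1 - p) * d * p := by noncomm_ring
    _ = p * d * p + p * d * (1 - p) := by rw [h₁, h₂]
    _ = p * d := by noncomm_ring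

lemma le_extendCorner (hS : IsTriangular S) (hp : InLat S p) :
    S ≤ S.extendCorner hp.isIdempotentElem_s11 :=
  Subalgebra.le_extendCorner (hp.mem_diagonal_s11 hS).1 fun _ => hp.one_sub_mul_mul_eq_zero

lemma diagonal_extendCorner (hS : IsTriangular S) (hp : InLat S p) :
    diagonal (S.extendCorner hp.isIdempotentElem_s11) = diagonal S := by
  ext a
  constructor
  · rintro ⟨ha, ha'⟩
    refine ⟨Subalgebra.mem_of_mem_extendCorner ha ?_, Subalgebra.mem_of_mem_extendCorner ha' ?_⟩
    · exact hp.isStarProjection.isSelfAdjoint.mul_mul_one_sub_eq_zero ha'.1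
    · exact hp.isStarProjection.isSelfAdjoint.mul_mul_one_sub_eq_zero
        (by simpa [star_eq_adjoint] using ha.1)
  · rintro ⟨ha, ha'⟩
    exact ⟨hp.le_extendCorner hS ha, hp.le_extendCorner hS ha'⟩

end InLat

namespace IsMaxTriangular

lemma extendCorner_eq (hS : IsMaxTriangular S) (hp : InLat S p) :
    S.extendCorner hp.isIdempotentElem_s11 = S := by
  refine (hS.2 _ ?_ (hp.le_extendCorner hS.1)).symm
  rw [IsTriangular, hp.diagonal_extendCorner hS.1]
  exact hS.1

lemma mem_of_one_sub_mul_eq_zero (hS : IsMaxTriangular S) (hp : InLat S p) {a : H →L[ℂ] H}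
    (h₁ : (1 - p) * a = 0) (h₂ : a * p = 0) : a ∈ S :=
  hS.extendCorner_eq hp ▸ Subalgebra.mem_extendCorner_of_mul_eq_zero h₁ h₂

lemma rankOne_mem (hS : IsMaxTriangular S) (hp : InLat S p) (x : H) {f : H} (hf : p f = 0) :
    rankOne ℂ (p x) f ∈ S := by
  refine hS.mem_of_one_sub_mul_eq_zero hp ?_ ?_
  · rw [mul_def, comp_rankOne, ← mul_apply_eq_comp, hp.isIdempotentElem_s11.one_sub_mul_self]
    simp
  · rw [mul_def, rankOne_comp, hp.2.1, hf, map_zero]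

end IsMaxTriangular

end Triangular

section Implementer

variable {H : Type*} [NormedAddCommGroup H] [InnerProductSpace ℂ H]
  {S : Subalgebra ℂ (H →L[ℂ] H)} (δ : S →L[ℂ] (H →L[ℂ] H)) {p : H →L[ℂ] H} {f : H}
  (hrank : ∀ z, rankOne ℂ (p z) f ∈ S)

noncomputable def rankOneImplementer : H →L[ℂ] H :=
  apply ℂ H f ∘L δ ∘L ((rankOne ℂ).flip f ∘L p).codRestrict (Subalgebra.toSubmodule S) hrank

lemma rankOneImplementer_apply (z : H) :
    rankOneImplementer δ hrank z = δ ⟨rankOne ℂ (p z) f, hrank z⟩ f :=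
  rfl

lemma rankOneImplementer_mul_self (hp : IsIdempotentElem p) :
    rankOneImplementer δ hrank * p = rankOneImplementer δ hrank := by
  ext z
  simp only [mul_apply_eq_comp, rankOneImplementer_apply, ← mul_apply_eq_comp p p, hp.eq]

lemma norm_rankOneImplementer_le (hp : ‖p‖ ≤ 1) (hf : ‖f‖ = 1) :
    ‖rankOneImplementer δ hrank‖ ≤ ‖δ‖ := by
  refine opNorm_le_bound _ (norm_nonneg δ) fun z => ?_
  calc ‖δ ⟨rankOne ℂ (p z) f, hrank z⟩ f‖ ≤ ‖δ ⟨rankOne ℂ (p z) f, hrank z⟩‖ := by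
        simpa [hf] using le_opNorm _ f
    _ ≤ ‖δ‖ * ‖rankOne ℂ (p z) f‖ := le_opNorm δ _
    _ = ‖δ‖ * ‖p z‖ := by rw [norm_rankOne, hf, mul_one]
    _ ≤ ‖δ‖ * ‖z‖ := by gcongr; simpa using le_of_opNorm_le p hp z

variable {δ} in
lemma IsDerivation.apply_mul_eq_commutator_mul [CompleteSpace H] (hδ : IsDerivation S δ)
    (hp : InLat S p) (hf : ‖f‖ = 1) (a : S) :
    δ a * p = (rankOneImplementer δ hrank * a - a * rankOneImplementer δ hrank) * p := by
  obtain ⟨a, ha⟩ := a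
  ext z
  have hapz : p (a (p z)) = a (p z) := by
    simpa only [mul_apply_eq_comp] using congr($((hp.2.2 a ha).symm) z)
  have hmul : ⟨a, ha⟩ * (⟨rankOne ℂ (p z) f, hrank z⟩ : S)
      = ⟨rankOne ℂ (p (a (p z))) f, hrank _⟩ :=
    Subtype.ext (by simp [mul_def, comp_rankOne, hapz])
  have hrf : rankOne ℂ (p z) f f = p z := by simp [inner_self_eq_norm_sq_to_K, hf]
  have hleibniz := congr($(hδ ⟨a, ha⟩ ⟨_, hrank z⟩) f)
  rw [hmul, add_apply, mul_apply_eq_comp, mul_apply_eq_comp] at hleibniz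
  dsimp only at hleibniz ⊢
  rw [hrf] at hleibniz
  have hbp : rankOneImplementer δ hrank (p z) = rankOneImplementer δ hrank z := by
    rw [← mul_apply_eq_comp, rankOneImplementer_mul_self δ hrank hp.1]
  simp only [mul_apply_eq_comp, sub_apply, hbp]
  rw [rankOneImplementer_apply, rankOneImplementer_apply, hleibniz, add_sub_cancel_right]

end Implementer

lemma ContinuousLinearMap.exists_norm_eq_one_apply_eq_zero {𝕜 E : Type*} [RCLike 𝕜]
    [NormedAddCommGroup E] [NormedSpace 𝕜 E] {p : E →L[𝕜] E} (hp : IsIdempotentElem p)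
    (hp1 : p ≠ 1) : ∃ f : E, ‖f‖ = 1 ∧ p f = 0 := by
  obtain ⟨z, hz⟩ : ∃ z, p z ≠ z := by
    by_contra! h
    exact hp1 (ContinuousLinearMap.ext h)
  have hg : z - p z ≠ 0 := sub_ne_zero.mpr hz.symm
  have hpg : p (z - p z) = 0 := by rw [map_sub, ← mul_apply_eq_comp, hp.eq, sub_self]
  exact ⟨(‖z - p z‖⁻¹ : 𝕜) • (z - p z), norm_smul_inv_norm hg, by rw [map_smul, hpg, smul_zero]⟩

open ContinuousLinearMap in
theorem deriv_implemented_on_p_general {H : Type*} [NormedAddCommGroup H] [InnerProductSpace ℂ H]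
    [CompleteSpace H] {S : Subalgebra ℂ (H →L[ℂ] H)} (hS : IsMaxTriangular S)
    (δ : S →L[ℂ] (H →L[ℂ] H)) (hδ : IsDerivation S δ)
    {p : H →L[ℂ] H} (hp : InLat S p) (hp1 : p ≠ 1) :
    ∃ b₁ : H →L[ℂ] H, b₁ * (1 - p) = 0 ∧ ‖b₁‖ ≤ ‖δ‖ ∧
      ∀ a : S, δ a * p = (b₁ * (a : H →L[ℂ] H) - (a : H →L[ℂ] H) * b₁) * p := by
  obtain ⟨f, hf, hpf⟩ := exists_norm_eq_one_apply_eq_zero hp.isIdempotentElem_s11 hp1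
  have hrank : ∀ z, rankOne ℂ (p z) f ∈ S := fun z => hS.rankOne_mem hp z hpf
  refine ⟨rankOneImplementer δ hrank, ?_,
    norm_rankOneImplementer_le δ hrank hp.isStarProjection.norm_le hf,
    hδ.apply_mul_eq_commutator_mul hrank hp hf⟩
  rw [mul_sub, mul_one, rankOneImplementer_mul_self δ hrank hp.isIdempotentElem_s11, sub_self]

/-- (Lemma 6.) For a bounded derivation `δ` on a maximal triangular algebra `S` and a
nontrivial `p ∈ lat(S)`, there is `b₁ ∈ B(H)` with `b₁ p⊥ = 0`, `‖b₁‖ ≤ ‖δ‖`, and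
`δ(a) p = (b₁ a - a b₁) p` for all `a ∈ S`. -/
theorem deriv_implemented_on_p {H : Type*} [NormedAddCommGroup H] [InnerProductSpace ℂ H]
    [CompleteSpace H] {S : Subalgebra ℂ (H →L[ℂ] H)} (hS : IsMaxTriangular S)
    (δ : S →L[ℂ] (H →L[ℂ] H)) (hδ : IsDerivation S δ)
    {p : H →L[ℂ] H} (hp : InLat S p) (hp0 : p ≠ 0) (hp1 : p ≠ 1) :
    ∃ b₁ : H →L[ℂ] H, b₁ * (1 - p) = 0 ∧ ‖b₁‖ ≤ ‖δ‖ ∧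
      ∀ a : S, δ a * p = (b₁ * (a : H →L[ℂ] H) - (a : H →L[ℂ] H) * b₁) * p :=
  deriv_implemented_on_p_general hS δ hδ hp hp1
end

section
/- Let S be a maximal triangular subalgebra of B(H), let δ : S → B(H) be a bounded derivation, and let p ∈ lat(S) with p ≠ 0 and p ≠ 1 (note p ∈ S since lat(S) ⊆ S ∩ S*, so a p ∈ S for every a ∈ S). Then there exists b₂ ∈ B(H) with ‖b₂‖ ≤ 2‖δ‖ such that δ(a p) = b₂ (a p) − (a p) b₂ for all a ∈ S; that is, b₂ implements δ on the algebra S p = p S p. -/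
/-!
Maximality of `S` forces the whole corner `p B(H) (1 - p)` into `S`: adjoining it does not change
the diagonal, so the enlarged algebra is still triangular. Taking a unit vector `ξ` in the range of
`1 - p`, the rank-one operators `p (h ⊗ ξ*) (1 - p)` therefore lie in `S`, and
`b h = p δ(p (h ⊗ ξ*) (1 - p)) ξ` satisfies `b c = p δ(c) p + c b` for every `c ∈ S` commuting
with `p`, with `‖b‖ ≤ ‖δ‖`. For `c = a p` the Leibniz rule applied to `c p = p c = c` shows that
the rest of `δ(c)` is implemented by the commutator `δ(p) p - p δ(p)`, of norm at most `‖δ(p)‖`.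
-/

set_option maxHeartbeats 1000000
set_option synthInstance.maxHeartbeats 400000

open ContinuousLinearMap InnerProductSpace

theorem IsStarProjection.norm_mul_sub_mul_le {A : Type*} [NormedRing A] [StarRing A]
    [CStarRing A] [NormedAlgebra ℂ A] {p : A} (hp : IsStarProjection p) (x : A) :
    ‖x * p - p * x‖ ≤ ‖x‖ := by
  have hu := hp.two_mul_sub_one_mem_unitary
  have h2 : (2 : ℂ) • (x * p - p * x) = x * (2 * p - 1) - (2 * p - 1) * x := by
    rw [smul_sub, two_smul, two_smul, two_mul]; noncomm_ring
  have : 2 * ‖x * p - p * x‖ ≤ 2 * ‖x‖ :=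
    calc 2 * ‖x * p - p * x‖ = ‖x * (2 * p - 1) - (2 * p - 1) * x‖ := by
          rw [← h2, norm_smul]; norm_num
      _ ≤ ‖x * (2 * p - 1)‖ + ‖(2 * p - 1) * x‖ := norm_sub_le _ _
      _ = 2 * ‖x‖ := by
          rw [CStarRing.norm_mul_mem_unitary x hu, CStarRing.norm_mem_unitary_mul x hu]; ring
  linarith

theorem mul_sub_mul_eq_of_leibniz {R : Type*} [Ring R] {p c d e b : R} (hp : IsIdempotentElem p)
    (hpc : p * c = c) (hcp : c * p = c) (h₁ : d = d * p + c * e) (h₂ : d = e * c + p * d)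
    (hb : b * c = p * d * p + c * b) :
    (b + (e * p - p * e)) * c - c * (b + (e * p - p * e)) = d := by
  have hce : c * e = d - d * p := eq_sub_of_add_eq' h₁.symm
  have hec : e * c = d - p * d := eq_sub_of_add_eq h₂.symm
  have hpd : p * d - p * d * p = d - d * p := by
    rw [mul_assoc, ← mul_sub, ← hce, ← mul_assoc, hpc]
  calc (b + (e * p - p * e)) * c - c * (b + (e * p - p * e))
      = b * c - c * b + e * (p * c) - p * (e * c) - c * e * p + c * p * e := by noncomm_ring
    _ = d + ((d - d * p) - (p * d - p * d * p)) := by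
      rw [hb, hpc, hcp, hec, hce, mul_sub, sub_mul, ← mul_assoc, hp.eq, mul_assoc d, hp.eq]
      abel
    _ = d := by rw [hpd, sub_self, add_zero]

theorem IsIdempotentElem.exists_norm_eq_one_apply_eq_self {𝕜 E : Type*} [RCLike 𝕜]
    [NormedAddCommGroup E] [NormedSpace 𝕜 E] {q : E →L[𝕜] E} (hq : IsIdempotentElem q)
    (hq0 : q ≠ 0) : ∃ ξ : E, ‖ξ‖ = 1 ∧ q ξ = ξ := by
  obtain ⟨v, hv⟩ : ∃ v, q v ≠ 0 := by
    by_contra! h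
    exact hq0 (ContinuousLinearMap.ext h)
  refine ⟨(‖q v‖⁻¹ : 𝕜) • q v, norm_smul_inv_norm hv, ?_⟩
  rw [map_smul, ← mul_apply_eq_comp, hq.eq]

section

variable {H : Type*} [NormedAddCommGroup H] [InnerProductSpace ℂ H] [CompleteSpace H]
  {S : Subalgebra ℂ (H →L[ℂ] H)} {p : H →L[ℂ] H}

theorem InLat.isStarProjection_s13 (hp : InLat S p) : IsStarProjection p :=
  ⟨hp.1, by rw [IsSelfAdjoint, star_eq_adjoint, hp.2.1]⟩

theorem InLat.one_sub_mul_mul_self_eq_zero (hp : InLat S p) {a : H →L[ℂ] H} (ha : a ∈ S) :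
    (1 - p) * a * p = 0 := by
  rw [sub_mul, sub_mul, one_mul, ← hp.2.2 a ha, sub_self]

variable (S p) in
def cornerExtension (hp : InLat S p) : Subalgebra ℂ (H →L[ℂ] H) where
  carrier := {t | ∃ s ∈ S, ∃ y, t = s + p * y * (1 - p)}
  zero_mem' := ⟨0, zero_mem S, 0, by simp⟩
  one_mem' := ⟨1, one_mem S, 0, by simp⟩
  add_mem' := by
    rintro _ _ ⟨s, hs, y, rfl⟩ ⟨s', hs', y', rfl⟩
    exact ⟨s + s', add_mem hs hs', y + y', by noncomm_ring⟩
  mul_mem' := by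
    rintro _ _ ⟨s, hs, y, rfl⟩ ⟨s', hs', y', rfl⟩
    refine ⟨s * s', mul_mem hs hs', s * p * y' + y * (1 - p) * s', ?_⟩
    have hpq : p * (1 - p) = 0 := hp.isStarProjection_s13.mul_one_sub_self
    have hps : p * (s * p) = s * p := by rw [hp.2.2 s hs, ← mul_assoc, ← mul_assoc, hp.1]
    have hqs' : (1 - p) * s' = (1 - p) * s' * (1 - p) := by
      rw [mul_one_sub, hp.one_sub_mul_mul_self_eq_zero hs', sub_zero]
    calc (s + p * y * (1 - p)) * (s' + p * y' * (1 - p))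
        = s * s' + p * (s * p) * y' * (1 - p) + p * y * ((1 - p) * s')
          + p * y * (p * (1 - p)) * y' * (1 - p) := by rw [hps]; noncomm_ring
      _ = s * s' + p * (s * p * y' + y * (1 - p) * s') * (1 - p) := by
        rw [hpq, hqs']; noncomm_ring
  algebraMap_mem' c := ⟨algebraMap ℂ _ c, S.algebraMap_mem c, 0, by simp⟩

theorem le_cornerExtension (hp : InLat S p) : S ≤ cornerExtension S p hp :=
  fun s hs => ⟨s, hs, 0, by simp⟩

theorem one_sub_mul_mul_self_eq_zero_of_mem_cornerExtension (hp : InLat S p) {t : H →L[ℂ] H}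
    (ht : t ∈ cornerExtension S p hp) : (1 - p) * t * p = 0 := by
  obtain ⟨s, hs, y, rfl⟩ := ht
  rw [mul_add, add_mul, hp.one_sub_mul_mul_self_eq_zero hs, zero_add]
  simp [← mul_assoc, hp.isStarProjection_s13.one_sub_mul_self]

theorem mem_of_mem_cornerExtension (hp : InLat S p) (hpS : p ∈ S) {t : H →L[ℂ] H}
    (ht : t ∈ cornerExtension S p hp) (hpt : p * t * (1 - p) = 0) : t ∈ S := by
  obtain ⟨s, hs, y, rfl⟩ := ht
  have hy : p * y * (1 - p) = -(p * s * (1 - p)) := by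
    rw [eq_neg_iff_add_eq_zero, ← hpt, mul_add, add_mul, add_comm]
    simp only [← mul_assoc, hp.1]
    rw [mul_assoc _ (1 - p), hp.isStarProjection_s13.one_sub.isIdempotentElem.eq]
  rw [hy]
  exact add_mem hs (neg_mem (mul_mem (mul_mem hpS hs) (sub_mem (one_mem S) hpS)))

theorem diagonal_cornerExtension_s13 (hp : InLat S p) (hpS : p ∈ S) :
    diagonal (cornerExtension S p hp) = diagonal S := by
  have hoff : ∀ u ∈ cornerExtension S p hp, adjoint u ∈ cornerExtension S p hp →
      p * u * (1 - p) = 0 := fun u _ hu' => by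
    have := congrArg star (one_sub_mul_mul_self_eq_zero_of_mem_cornerExtension hp hu')
    rwa [star_mul, star_mul, star_eq_adjoint (adjoint u), adjoint_adjoint,
      hp.isStarProjection_s13.isSelfAdjoint.star_eq,
      hp.isStarProjection_s13.one_sub.isSelfAdjoint.star_eq, star_zero, ← mul_assoc] at this
  refine Set.Subset.antisymm (fun t ⟨ht, ht'⟩ => ⟨?_, ?_⟩)
    (fun t ⟨ht, ht'⟩ => ⟨le_cornerExtension hp ht, le_cornerExtension hp ht'⟩)
  · exact mem_of_mem_cornerExtension hp hpS ht (hoff t ht ht')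
  · refine mem_of_mem_cornerExtension hp hpS ht' (hoff _ ht' ?_)
    rwa [adjoint_adjoint]

theorem IsMaxTriangular.mul_mul_one_sub_mem (hS : IsMaxTriangular S) (hp : InLat S p)
    (hpS : p ∈ S) (x : H →L[ℂ] H) : p * x * (1 - p) ∈ S := by
  have hT : IsTriangular (cornerExtension S p hp) := by
    rw [IsTriangular, diagonal_cornerExtension_s13 hp hpS]
    exact hS.1
  rw [hS.2 _ hT (le_cornerExtension hp)]
  exact ⟨0, zero_mem S, x, by simp⟩

theorem IsDerivation.exists_mul_eq_compression_add {δ : S →L[ℂ] (H →L[ℂ] H)}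
    (hδ : IsDerivation S δ) (hp : IsStarProjection p) (hcorner : ∀ x, p * x * (1 - p) ∈ S)
    (hp1 : p ≠ 1) :
    ∃ b : H →L[ℂ] H, ‖b‖ ≤ ‖δ‖ ∧
      ∀ c : S, Commute p (c : H →L[ℂ] H) → b * c = p * δ c * p + c * b := by
  obtain ⟨ξ, hξ, hqξ⟩ :=
    hp.one_sub.isIdempotentElem.exists_norm_eq_one_apply_eq_self (sub_ne_zero.2 hp1.symm)
  let F : H →ₗ[ℂ] S :=
    { toFun h := ⟨p * rankOne ℂ h ξ * (1 - p), hcorner _⟩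
      map_add' h h' := by ext1; simp [mul_add, add_mul]
      map_smul' c h := by ext1; simp }
  have hF_norm (h : H) : ‖F h‖ ≤ ‖h‖ :=
    calc ‖F h‖ = ‖p * rankOne ℂ h ξ * (1 - p)‖ := rfl
      _ ≤ ‖p‖ * ‖rankOne ℂ h ξ‖ * ‖1 - p‖ := norm_mul₃_le
      _ ≤ 1 * (‖h‖ * 1) * 1 := by
        rw [norm_rankOne, hξ]
        gcongr
        exacts [hp.norm_le, hp.one_sub.norm_le]
      _ = ‖h‖ := by ring
  have hF_ξ (h : H) : (F h : H →L[ℂ] H) ξ = p h := by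
    change (p * rankOne ℂ h ξ * (1 - p)) ξ = p h
    simp [hqξ, inner_self_eq_norm_sq_to_K, hξ]
  have hF_mul (c : S) (hc : Commute p (c : H →L[ℂ] H)) (h : H) :
      F ((c : H →L[ℂ] H) h) = c * F h := by
    ext1
    change p * rankOne ℂ ((c : H →L[ℂ] H) h) ξ * (1 - p) =
      (c : H →L[ℂ] H) * (p * rankOne ℂ h ξ * (1 - p))
    rw [← comp_rankOne, ← mul_def, ← mul_assoc, ← mul_assoc, hc.eq, mul_assoc _ p]
  have hp_le (v : H) : ‖p v‖ ≤ ‖v‖ := by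
    simpa using p.le_of_opNorm_le hp.norm_le v
  let b : H →L[ℂ] H := ((p ∘L apply ℂ H ξ ∘L δ).toLinearMap ∘ₗ F).mkContinuous ‖δ‖ fun h =>
    calc ‖p (δ (F h) ξ)‖ ≤ ‖δ (F h) ξ‖ := hp_le _
      _ ≤ ‖δ (F h)‖ := by simpa [hξ] using (δ (F h)).le_opNorm ξ
      _ ≤ ‖δ‖ * ‖F h‖ := δ.le_opNorm _
      _ ≤ ‖δ‖ * ‖h‖ := by gcongr; exact hF_norm h
  refine ⟨b, LinearMap.mkContinuous_norm_le _ (norm_nonneg δ) _, fun c hc => ?_⟩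
  ext h
  change p (δ (F ((c : H →L[ℂ] H) h)) ξ) =
    p (δ c (p h)) + (c : H →L[ℂ] H) (p (δ (F h) ξ))
  rw [hF_mul c hc, hδ, add_apply, map_add]
  congr 1
  · exact congrArg (fun v => p (δ c v)) (hF_ξ h)
  · exact DFunLike.congr_fun hc.eq _

end

theorem deriv_implemented_on_Sp_general {H : Type*} [NormedAddCommGroup H] [InnerProductSpace ℂ H]
    [CompleteSpace H] {S : Subalgebra ℂ (H →L[ℂ] H)} (hS : IsMaxTriangular S)
    (δ : S →L[ℂ] (H →L[ℂ] H)) (hδ : IsDerivation S δ)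
    {p : H →L[ℂ] H} (hp : InLat S p) (hp1 : p ≠ 1) (hpS : p ∈ S) :
    ∃ b₂ : H →L[ℂ] H, ‖b₂‖ ≤ 2 * ‖δ‖ ∧
      ∀ a : S, δ (a * ⟨p, hpS⟩) =
        b₂ * ((a : H →L[ℂ] H) * p) - ((a : H →L[ℂ] H) * p) * b₂ := by
  have hproj := hp.isStarProjection_s13
  obtain ⟨b, hb_norm, hb⟩ :=
    hδ.exists_mul_eq_compression_add hproj (hS.mul_mul_one_sub_mem hp hpS) hp1
  set e : S := ⟨p, hpS⟩
  have he_norm : ‖δ e‖ ≤ ‖δ‖ :=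
    calc ‖δ e‖ ≤ ‖δ‖ * ‖p‖ := δ.le_opNorm e
      _ ≤ ‖δ‖ := mul_le_of_le_one_right (norm_nonneg δ) hproj.norm_le
  refine ⟨b + (δ e * p - p * δ e), ?_, fun a => ?_⟩
  · calc ‖b + (δ e * p - p * δ e)‖ ≤ ‖δ‖ + ‖δ‖ :=
          norm_add_le_of_le hb_norm ((hproj.norm_mul_sub_mul_le _).trans he_norm)
      _ = 2 * ‖δ‖ := by ring
  · have hpc : p * (a * p) = a * p := by rw [← mul_assoc, ← hp.2.2 a a.2]
    have hcp : a * p * p = a * p := by rw [mul_assoc, hp.1]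
    have h₁ := hδ (a * e) e
    rw [show a * e * e = a * e from Subtype.ext hcp] at h₁
    have h₂ := hδ e (a * e)
    rw [show e * (a * e) = a * e from Subtype.ext hpc] at h₂
    exact (mul_sub_mul_eq_of_leibniz hproj.isIdempotentElem hpc hcp h₁ h₂
      (hb (a * e) (hpc.trans hcp.symm))).symm

/-- (Theorem 11.) For a bounded derivation `δ` on a maximal triangular algebra `S` and a
nontrivial `p ∈ lat(S)` (which consequently lies in `S`, since `lat(S) ⊆ S ∩ S*`),
there is `b₂ ∈ B(H)` with `‖b₂‖ ≤ 2‖δ‖` implementing `δ` on the algebra `S p = p S p`: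
`δ(a p) = b₂ (a p) - (a p) b₂` for all `a ∈ S`. -/
theorem deriv_implemented_on_Sp {H : Type*} [NormedAddCommGroup H] [InnerProductSpace ℂ H]
    [CompleteSpace H] {S : Subalgebra ℂ (H →L[ℂ] H)} (hS : IsMaxTriangular S)
    (δ : S →L[ℂ] (H →L[ℂ] H)) (hδ : IsDerivation S δ)
    {p : H →L[ℂ] H} (hp : InLat S p) (hp0 : p ≠ 0) (hp1 : p ≠ 1) (hpS : p ∈ S) :
    ∃ b₂ : H →L[ℂ] H, ‖b₂‖ ≤ 2 * ‖δ‖ ∧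
      ∀ a : S, δ (a * ⟨p, hpS⟩) =
        b₂ * ((a : H →L[ℂ] H) * p) - ((a : H →L[ℂ] H) * p) * b₂ :=
  deriv_implemented_on_Sp_general hS δ hδ hp hp1 hpS
end

section
/- Let S be a maximal triangular subalgebra of B(H), let δ : S → B(H) be a bounded derivation, and let p ∈ lat(S) with p ≠ 0 and p ≠ 1 (note p, 1 − p ∈ S since lat(S) ⊆ S ∩ S* and S is unital). Then there exists b ∈ B(H) with ‖b‖ ≤ 4‖δ‖ such that for all a ∈ S: δ(a p) = b (a p) − (a p) b and δ((1−p) a (1−p)) = b (1−p) a (1−p) − (1−p) a (1−p) b; that is, b implements δ on the algebras S p and p⊥ S p⊥. -/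
set_option maxHeartbeats 1000000
set_option synthInstance.maxHeartbeats 400000

open ContinuousLinearMap in
theorem aux_corner_mem {H : Type*} [NormedAddCommGroup H] [InnerProductSpace ℂ H]
    [CompleteSpace H] {S : Subalgebra ℂ (H →L[ℂ] H)} (hS : IsMaxTriangular S)
    {p : H →L[ℂ] H} (hp : InLat S p) (hpS : p ∈ S) (x : H →L[ℂ] H) :
    p * x * (1 - p) ∈ S := by
  obtain ⟨hpp, hpadj, hlat⟩ := hp
  set q : H →L[ℂ] H := 1 - p with hq_def
  have hqS : q ∈ S := sub_mem S.one_mem hpS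
  have hqp : q * p = 0 := by rw [hq_def, sub_mul, one_mul, hpp, sub_self]
  have hpq : p * q = 0 := by rw [hq_def, mul_sub, mul_one, hpp, sub_self]
  have hqq : q * q = q := by rw [hq_def, sub_mul, one_mul, mul_sub, mul_one, hpp]; abel
  have hpq1 : p + q = 1 := by rw [hq_def]; abel
  have hpstar : star p = p := by rw [star_eq_adjoint]; exact hpadj
  have hqstar : star q = q := by rw [hq_def, star_sub, star_one, hpstar]
  have hqap : ∀ a ∈ S, q * a * p = 0 := by
    intro a ha
    have h1 : q * a * p = a * p - p * a * p := by rw [hq_def]; noncomm_ring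
    rw [h1, hlat a ha, sub_self]
  -- the enlarged algebra S + p B(H) q
  let T : Subalgebra ℂ (H →L[ℂ] H) :=
    { carrier := {t | ∃ a ∈ S, ∃ y : H →L[ℂ] H, t = a + p * y * q}
      mul_mem' := by
        rintro t1 t2 ⟨a, ha, y, rfl⟩ ⟨a', ha', y', rfl⟩
        refine ⟨a * a', mul_mem ha ha', a * (p * y') + y * (q * a'), ?_⟩
        have e1 : a * (p * y' * q) = p * (a * (p * y')) * q := by
          have h : a * (p * y' * q) = (a * p) * (y' * q) := by noncomm_ring
          rw [h, hlat a ha]; noncomm_ring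
        have h3 : q * a' = q * a' * q := by
          conv_lhs => rw [← mul_one (q * a'), ← hpq1, mul_add, hqap a' ha', zero_add]
        have e2 : p * y * q * a' = p * (y * (q * a')) * q := by
          conv_lhs => rw [show p * y * q * a' = (p * y) * (q * a') from by noncomm_ring, h3]
          noncomm_ring
        have e3 : (p * y * q) * (p * y' * q) = 0 := by
          rw [show (p * y * q) * (p * y' * q) = (p * y) * ((q * p) * (y' * q)) from by
            noncomm_ring, hqp]
          simp
        rw [add_mul, mul_add, mul_add, e3, add_zero, e1, e2]
        noncomm_ring
      one_mem' := ⟨1, S.one_mem, 0, by simp⟩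
      add_mem' := by
        rintro t1 t2 ⟨a, ha, y, rfl⟩ ⟨a', ha', y', rfl⟩
        exact ⟨a + a', add_mem ha ha', y + y', by noncomm_ring⟩
      zero_mem' := ⟨0, S.zero_mem, 0, by simp⟩
      algebraMap_mem' := fun c => ⟨algebraMap ℂ _ c, S.algebraMap_mem c, 0, by simp⟩ }
  have hST : S ≤ T := fun a ha => ⟨a, ha, 0, by simp⟩
  have hqtp : ∀ t ∈ T, q * t * p = 0 := by
    rintro t ⟨a, ha, y, rfl⟩
    have h : q * (a + p * y * q) * p = q * a * p + (q * p) * (y * (q * p)) := by noncomm_ring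
    rw [h, hqap a ha, hqp]
    simp
  have key : ∀ t, t ∈ T → q * (adjoint t) * p = 0 → t ∈ S := by
    rintro t htT hadj
    obtain ⟨a, ha, y, hty⟩ := htT
    have hptq : p * t * q = 0 := by
      have := congrArg star hadj
      rw [star_zero] at this
      rw [show star (q * adjoint t * p) = star p * (star (adjoint t) * star q) from by
        rw [star_mul, star_mul], hpstar, hqstar] at this
      rw [show star (adjoint t) = t from by rw [star_eq_adjoint, adjoint_adjoint]] at this
      rw [← this]; noncomm_ring
    have h2 : p * t * q = p * a * q + p * y * q := by
      rw [hty, show p * (a + p * y * q) * q = p * a * q + (p * p) * y * (q * q) from by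
        noncomm_ring, hpp, hqq]
    have h3 : p * y * q = -(p * a * q) := by
      have h0 : p * a * q + p * y * q = 0 := by rw [← h2, hptq]
      exact eq_neg_of_add_eq_zero_right h0
    rw [hty, h3]
    exact add_mem ha (neg_mem (mul_mem (mul_mem hpS ha) hqS))
  have hdeq : diagonal T = diagonal S := by
    ext d
    constructor
    · rintro ⟨hd1, hd2⟩
      refine ⟨key d hd1 (hqtp _ hd2), key (adjoint d) hd2 ?_⟩
      rw [adjoint_adjoint]; exact hqtp _ hd1
    · rintro ⟨hd1, hd2⟩
      exact ⟨hST hd1, hST hd2⟩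
  have hTtri : IsTriangular T := by
    rw [IsTriangular, hdeq]; exact hS.1
  have hSeqT : S = T := hS.2 T hTtri hST
  have : p * x * q ∈ T := ⟨0, S.zero_mem, x, by rw [zero_add]⟩
  rw [hSeqT]
  exact this

set_option maxHeartbeats 40000000 in
open scoped InnerProductSpace in
open ContinuousLinearMap in
/-- (Theorem 12.) For a bounded derivation `δ` on a maximal triangular algebra `S` and a
nontrivial `p ∈ lat(S)` (which lies in `S` since `lat(S) ⊆ S ∩ S*`, and `S` is unital so
also `1 - p ∈ S`), there is `b ∈ B(H)` with `‖b‖ ≤ 4‖δ‖` implementing `δ` on both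
algebras `S p` and `p⊥ S p⊥`. -/
theorem deriv_implemented_on_Sp_and_corner {H : Type*} [NormedAddCommGroup H]
    [InnerProductSpace ℂ H] [CompleteSpace H] {S : Subalgebra ℂ (H →L[ℂ] H)}
    (hS : IsMaxTriangular S)
    (δ : S →L[ℂ] (H →L[ℂ] H)) (hδ : IsDerivation S δ)
    {p : H →L[ℂ] H} (hp : InLat S p) (hp0 : p ≠ 0) (hp1 : p ≠ 1) (hpS : p ∈ S) :
    ∃ b : H →L[ℂ] H, ‖b‖ ≤ 4 * ‖δ‖ ∧
      ∀ a : S,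
        δ (a * ⟨p, hpS⟩) =
          b * ((a : H →L[ℂ] H) * p) - ((a : H →L[ℂ] H) * p) * b ∧
        δ ((1 - ⟨p, hpS⟩) * a * (1 - ⟨p, hpS⟩)) =
          b * ((1 - p) * (a : H →L[ℂ] H) * (1 - p)) -
            ((1 - p) * (a : H →L[ℂ] H) * (1 - p)) * b := by
  classical
  have hpp : p * p = p := hp.1
  have hpadj : adjoint p = p := hp.2.1
  have hlat : ∀ a ∈ S, a * p = p * a * p := hp.2.2
  set q : H →L[ℂ] H := 1 - p with hq_def
  have hqp : q * p = 0 := by rw [hq_def, sub_mul, one_mul, hpp, sub_self]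
  have hpq : p * q = 0 := by rw [hq_def, mul_sub, mul_one, hpp, sub_self]
  have hqq : q * q = q := by rw [hq_def, sub_mul, one_mul, mul_sub, mul_one, hpp]; abel
  have hpq1 : p + q = 1 := by rw [hq_def]; abel
  have hpstar : star p = p := by rw [star_eq_adjoint]; exact hpadj
  have hqstar : star q = q := by rw [hq_def, star_sub, star_one, hpstar]
  have hqadj : adjoint q = q := by rw [← star_eq_adjoint]; exact hqstar
  have corner : ∀ x : H →L[ℂ] H, p * x * q ∈ S := fun x => aux_corner_mem hS hp hpS x
  -- norms of self-adjoint idempotents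
  have hproj_norm : ∀ r : H →L[ℂ] H, r * r = r → star r = r → ‖r‖ ≤ 1 := by
    intro r hrr hrstar
    have hradj : adjoint r = r := by rw [← star_eq_adjoint]; exact hrstar
    refine opNorm_le_bound _ zero_le_one fun ξ => ?_
    rw [one_mul]
    rcases eq_or_ne (r ξ) 0 with h0 | h0
    · rw [h0, norm_zero]; exact norm_nonneg ξ
    · have h1 : ⟪r ξ, r ξ⟫_ℂ = ⟪ξ, r ξ⟫_ℂ := by
        nth_rewrite 1 [← hradj]
        rw [adjoint_inner_left, ← mul_apply_eq_comp, hrr]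
      have h2 : (‖r ξ‖ : ℝ)^2 ≤ ‖ξ‖ * ‖r ξ‖ := by
        have h3 := norm_inner_le_norm (𝕜 := ℂ) ξ (r ξ)
        rw [← h1, inner_self_eq_norm_sq_to_K] at h3
        simpa using h3
      have h4 : 0 < ‖r ξ‖ := norm_pos_iff.mpr h0
      nlinarith
  have hpnorm : ‖p‖ ≤ 1 := hproj_norm p hpp hpstar
  have hqnorm : ‖q‖ ≤ 1 := hproj_norm q hqq hqstar
  have mul3_le : ∀ x y z c : ℝ, 0 ≤ x → 0 ≤ y → 0 ≤ z → 0 ≤ c → x ≤ 1 → z ≤ 1 → y ≤ c →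
      x * y * z ≤ c := by
    intro x y z c hx hy hz hc hx1 hz1 hyc
    have h1 : x * y ≤ 1 * c := mul_le_mul hx1 hyc hy zero_le_one
    have h2 : (x * y) * z ≤ (1 * c) * 1 := mul_le_mul h1 hz1 hz (by positivity)
    linarith
  -- unit vectors in the ranges of p and q
  have hgetvec : ∀ r : H →L[ℂ] H, r * r = r → r ≠ 0 →
      ∃ u : H, r u = u ∧ ‖u‖ = 1 ∧ ⟪u, u⟫_ℂ = 1 := by
    intro r hrr hr0
    have : ∃ v, r v ≠ 0 := by
      by_contra h
      push_neg at h
      exact hr0 (by ext v; simpa using h v)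
    obtain ⟨v, hv⟩ := this
    have hu1 : ‖((‖r v‖ : ℂ))⁻¹ • (r v)‖ = 1 := by
      have hne : ‖r v‖ ≠ 0 := norm_ne_zero_iff.mpr hv
      rw [norm_smul]
      simp [hne]
    refine ⟨((‖r v‖ : ℂ))⁻¹ • (r v), ?_, hu1, by
      rw [inner_self_eq_norm_sq_to_K, hu1]; norm_num⟩
    rw [map_smul]
    congr 1
    rw [← mul_apply_eq_comp, hrr]
  obtain ⟨e, hpe, henorm, heinner⟩ := hgetvec p hpp hp0
  obtain ⟨f, hqf, hfnorm, hfinner⟩ := hgetvec q hqq (by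
    rw [hq_def]; intro h; exact hp1 (sub_eq_zero.mp h).symm)
  -- ==================  construction of B  ==================
  obtain ⟨k, hkOp⟩ : ∃ k : H → (H →L[ℂ] H), ∀ ξ, k ξ = (innerSL ℂ f).smulRight ξ :=
    ⟨_, fun _ => rfl⟩
  obtain ⟨m, hmapp⟩ : ∃ m : H → (H →L[ℂ] H), ∀ ξ, m ξ = p * k ξ * q := ⟨_, fun _ => rfl⟩
  have hmS : ∀ ξ, m ξ ∈ S := by
    intro ξ
    rw [hmapp]
    exact corner _
  have hkapp : ∀ ξ η, k ξ η = ⟪f, η⟫_ℂ • ξ := by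
    intro ξ η
    rw [hkOp]
    rfl
  have hmapp2 : ∀ ξ η, m ξ η = ⟪f, q η⟫_ℂ • p ξ := by
    intro ξ η
    rw [hmapp, mul_apply_eq_comp, mul_apply_eq_comp, hkapp, map_smul]
  have hknorm : ∀ ξ, ‖k ξ‖ = ‖ξ‖ := by
    intro ξ
    rw [hkOp, norm_smulRight_apply, innerSL_apply_norm, hfnorm, one_mul]
  have hmnorm : ∀ ξ, ‖m ξ‖ ≤ ‖ξ‖ := by
    intro ξ
    calc ‖m ξ‖ ≤ ‖p * k ξ‖ * ‖q‖ := by rw [hmapp]; exact norm_mul_le _ _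
      _ ≤ (‖p‖ * ‖k ξ‖) * ‖q‖ :=
        mul_le_mul_of_nonneg_right (norm_mul_le _ _) (norm_nonneg _)
      _ ≤ ‖ξ‖ := by
        rw [hknorm ξ]
        exact mul3_le _ _ _ _ (norm_nonneg p) (norm_nonneg ξ) (norm_nonneg q) (norm_nonneg ξ)
          hpnorm hqnorm le_rfl
  have hmadd : ∀ ξ ζ, m (ξ + ζ) = m ξ + m ζ := by
    intro ξ ζ
    ext η
    rw [add_apply, hmapp2, hmapp2, hmapp2, map_add, smul_add]
  have hmsmul : ∀ (c : ℂ) ξ, m (c • ξ) = c • m ξ := by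
    intro c ξ
    ext η
    rw [smul_apply, hmapp2, hmapp2, map_smul, smul_comm]
  have hBbound : ∀ ξ, ‖δ ⟨m ξ, hmS ξ⟩ f‖ ≤ ‖δ‖ * ‖ξ‖ := by
    intro ξ
    calc ‖δ ⟨m ξ, hmS ξ⟩ f‖ ≤ ‖δ ⟨m ξ, hmS ξ⟩‖ * ‖f‖ := le_opNorm _ f
      _ = ‖δ ⟨m ξ, hmS ξ⟩‖ := by rw [hfnorm, mul_one]
      _ ≤ ‖δ‖ * ‖(⟨m ξ, hmS ξ⟩ : S)‖ := le_opNorm δ _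
      _ ≤ ‖δ‖ * ‖ξ‖ := mul_le_mul_of_nonneg_left (hmnorm ξ) (norm_nonneg δ)
  set Blin : H →ₗ[ℂ] H :=
    { toFun := fun ξ => δ ⟨m ξ, hmS ξ⟩ f
      map_add' := by
        intro ξ ζ
        have h1 : (⟨m (ξ + ζ), hmS _⟩ : S) = ⟨m ξ, hmS ξ⟩ + ⟨m ζ, hmS ζ⟩ :=
          Subtype.ext (hmadd ξ ζ)
        show δ ⟨m (ξ + ζ), hmS _⟩ f = δ ⟨m ξ, hmS ξ⟩ f + δ ⟨m ζ, hmS ζ⟩ f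
        rw [h1, map_add, add_apply]
      map_smul' := by
        intro c ξ
        have h1 : (⟨m (c • ξ), hmS _⟩ : S) = c • ⟨m ξ, hmS ξ⟩ :=
          Subtype.ext (hmsmul c ξ)
        show δ ⟨m (c • ξ), hmS _⟩ f = (RingHom.id ℂ) c • δ ⟨m ξ, hmS ξ⟩ f
        rw [h1, map_smul]
        simp } with hBlin_def
  set B : H →L[ℂ] H := Blin.mkContinuous ‖δ‖ hBbound with hB_def
  have hBnorm : ‖B‖ ≤ ‖δ‖ := Blin.mkContinuous_norm_le (norm_nonneg δ) hBbound
  have hBapp : ∀ ξ, B ξ = δ ⟨m ξ, hmS ξ⟩ f := fun ξ => rfl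
  have hmf : ∀ ζ, m ζ f = p ζ := by
    intro ζ
    rw [hmapp2, hqf, hfinner, one_smul]
  -- ==================  construction of C  ==================
  obtain ⟨k', hk'Op⟩ : ∃ k' : H → (H →L[ℂ] H), ∀ η, k' η = (innerSL ℂ η).smulRight e :=
    ⟨_, fun _ => rfl⟩
  obtain ⟨m', hm'app⟩ : ∃ m' : H → (H →L[ℂ] H), ∀ η, m' η = p * k' η * q := ⟨_, fun _ => rfl⟩
  have hm'S : ∀ η, m' η ∈ S := by
    intro η
    rw [hm'app]
    exact corner _
  have hk'app : ∀ η ζ, k' η ζ = ⟪η, ζ⟫_ℂ • e := by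
    intro η ζ
    rw [hk'Op]
    rfl
  have hm'app2 : ∀ η ζ, m' η ζ = ⟪η, q ζ⟫_ℂ • e := by
    intro η ζ
    rw [hm'app, mul_apply_eq_comp, mul_apply_eq_comp, hk'app, map_smul, hpe]
  have hk'norm : ∀ η, ‖k' η‖ = ‖η‖ := by
    intro η
    rw [hk'Op, norm_smulRight_apply, innerSL_apply_norm, henorm, mul_one]
  have hm'norm : ∀ η, ‖m' η‖ ≤ ‖η‖ := by
    intro η
    calc ‖m' η‖ ≤ ‖p * k' η‖ * ‖q‖ := by rw [hm'app]; exact norm_mul_le _ _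
      _ ≤ (‖p‖ * ‖k' η‖) * ‖q‖ :=
        mul_le_mul_of_nonneg_right (norm_mul_le _ _) (norm_nonneg _)
      _ ≤ ‖η‖ := by
        rw [hk'norm η]
        exact mul3_le _ _ _ _ (norm_nonneg p) (norm_nonneg η) (norm_nonneg q) (norm_nonneg η)
          hpnorm hqnorm le_rfl
  have hm'add : ∀ η η', m' (η + η') = m' η + m' η' := by
    intro η η'
    ext ζ
    rw [add_apply, hm'app2, hm'app2, hm'app2, inner_add_left, add_smul]
  have hm'smul : ∀ (c : ℂ) η, m' (c • η) = (starRingEnd ℂ) c • m' η := by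
    intro c η
    ext ζ
    rw [smul_apply, hm'app2, hm'app2, inner_smul_left, smul_smul]
  have hCbound : ∀ η, ‖adjoint (δ ⟨m' η, hm'S η⟩) e‖ ≤ ‖δ‖ * ‖η‖ := by
    intro η
    calc ‖adjoint (δ ⟨m' η, hm'S η⟩) e‖ ≤ ‖adjoint (δ ⟨m' η, hm'S η⟩)‖ * ‖e‖ := le_opNorm _ e
      _ = ‖δ ⟨m' η, hm'S η⟩‖ := by
        rw [henorm, mul_one, LinearIsometryEquiv.norm_map ContinuousLinearMap.adjoint]
      _ ≤ ‖δ‖ * ‖(⟨m' η, hm'S η⟩ : S)‖ := le_opNorm δ _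
      _ ≤ ‖δ‖ * ‖η‖ := mul_le_mul_of_nonneg_left (hm'norm η) (norm_nonneg δ)
  set Clin : H →ₗ[ℂ] H :=
    { toFun := fun η => adjoint (δ ⟨m' η, hm'S η⟩) e
      map_add' := by
        intro η η'
        have h1 : (⟨m' (η + η'), hm'S _⟩ : S) = ⟨m' η, hm'S η⟩ + ⟨m' η', hm'S η'⟩ :=
          Subtype.ext (hm'add η η')
        show adjoint (δ ⟨m' (η + η'), hm'S _⟩) e
            = adjoint (δ ⟨m' η, hm'S η⟩) e + adjoint (δ ⟨m' η', hm'S η'⟩) e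
        rw [h1, map_add, map_add, add_apply]
      map_smul' := by
        intro c η
        have h1 : (⟨m' (c • η), hm'S _⟩ : S) = (starRingEnd ℂ) c • ⟨m' η, hm'S η⟩ :=
          Subtype.ext (hm'smul c η)
        show adjoint (δ ⟨m' (c • η), hm'S _⟩) e
            = (RingHom.id ℂ) c • adjoint (δ ⟨m' η, hm'S η⟩) e
        rw [h1, map_smul, LinearIsometryEquiv.map_smulₛₗ ContinuousLinearMap.adjoint]
        simp } with hClin_def
  set C : H →L[ℂ] H := Clin.mkContinuous ‖δ‖ hCbound with hC_def
  have hCnorm : ‖C‖ ≤ ‖δ‖ := Clin.mkContinuous_norm_le (norm_nonneg δ) hCbound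
  have hCapp : ∀ η, C η = adjoint (δ ⟨m' η, hm'S η⟩) e := fun η => rfl
  have hm'adj : ∀ ζ, adjoint (m' ζ) e = q ζ := by
    intro ζ
    refine ext_inner_left ℂ fun v => ?_
    rw [adjoint_inner_right, hm'app2, inner_smul_left, heinner, mul_one, inner_conj_symm]
    conv_rhs => rw [← hqadj]
    rw [adjoint_inner_right]
  set b2 : H →L[ℂ] H := -(adjoint C) with hb2_def
  have hb2norm : ‖b2‖ ≤ ‖δ‖ := by
    rw [hb2_def, norm_neg, LinearIsometryEquiv.norm_map ContinuousLinearMap.adjoint]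
    exact hCnorm
  -- ==================  the implementing operator  ==================
  set P : S := (⟨p, hpS⟩ : S) with hP_def
  obtain ⟨dP, hdP_def⟩ : ∃ dP : H →L[ℂ] H, dP = δ P := ⟨δ P, rfl⟩
  have hdPnorm : ‖dP‖ ≤ ‖δ‖ := by
    rw [hdP_def]
    calc ‖δ P‖ ≤ ‖δ‖ * ‖P‖ := le_opNorm δ P
      _ ≤ ‖δ‖ * 1 := mul_le_mul_of_nonneg_left hpnorm (norm_nonneg δ)
      _ = ‖δ‖ := mul_one _
  set b : H →L[ℂ] H := p * B * p + q * b2 * q + q * dP * p - p * dP * q with hb_def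
  refine ⟨b, ?_, ?_⟩
  · -- norm estimate
    have tri : ∀ u v w : H →L[ℂ] H, ‖u‖ ≤ 1 → ‖w‖ ≤ 1 → ‖v‖ ≤ ‖δ‖ → ‖u * v * w‖ ≤ ‖δ‖ := by
      intro u v w hu hw hv
      calc ‖u * v * w‖ ≤ ‖u * v‖ * ‖w‖ := norm_mul_le _ _
        _ ≤ (‖u‖ * ‖v‖) * ‖w‖ := mul_le_mul_of_nonneg_right (norm_mul_le _ _) (norm_nonneg _)
        _ ≤ ‖δ‖ :=
          mul3_le _ _ _ _ (norm_nonneg u) (norm_nonneg v) (norm_nonneg w) (norm_nonneg δ) hu hw hv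
    have h1 : ‖p * B * p‖ ≤ ‖δ‖ := tri p B p hpnorm hpnorm hBnorm
    have h2 : ‖q * b2 * q‖ ≤ ‖δ‖ := tri q b2 q hqnorm hqnorm hb2norm
    have h3 : ‖q * dP * p‖ ≤ ‖δ‖ := tri q dP p hqnorm hpnorm hdPnorm
    have h4 : ‖p * dP * q‖ ≤ ‖δ‖ := tri p dP q hpnorm hqnorm hdPnorm
    calc ‖b‖ ≤ ‖p * B * p + q * b2 * q + q * dP * p‖ + ‖p * dP * q‖ := norm_sub_le _ _
      _ ≤ (‖p * B * p + q * b2 * q‖ + ‖q * dP * p‖) + ‖p * dP * q‖ :=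
        add_le_add_left (norm_add_le _ _) _
      _ ≤ ((‖p * B * p‖ + ‖q * b2 * q‖) + ‖q * dP * p‖) + ‖p * dP * q‖ :=
        add_le_add_left (add_le_add_left (norm_add_le _ _) _) _
      _ ≤ 4 * ‖δ‖ := by linarith
  · -- the implementation identities
    intro a
    set av : H →L[ℂ] H := (a : H →L[ℂ] H) with hav_def
    constructor
    · -- first identity : δ(a p) = [b, a p]
      set s : S := a * P with hs_def
      obtain ⟨sv, hsv_def⟩ : ∃ sv : H →L[ℂ] H, sv = av * p := ⟨_, rfl⟩
      have hsvco : (s : H →L[ℂ] H) = sv := by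
        show (a : H →L[ℂ] H) * p = sv
        rw [hsv_def, hav_def]
      set ds : H →L[ℂ] H := δ s with hds_def
      have hs1 : sv * p = sv := by
        rw [hsv_def, show (av * p) * p = av * (p * p) from by noncomm_ring, hpp]
      have hs2 : p * sv = sv := by
        rw [hsv_def, show p * (av * p) = p * av * p from by noncomm_ring, ← hlat av a.2]
      have hs3 : sv * q = 0 := by
        rw [hsv_def, show (av * p) * q = av * (p * q) from by noncomm_ring, hpq, mul_zero]
      have hs4 : q * sv = 0 := by
        have h : q * av * p = 0 := by
          have h1 : q * av * p = av * p - p * av * p := by rw [hq_def]; noncomm_ring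
          rw [h1, hlat av a.2, sub_self]
        rw [hsv_def, ← mul_assoc, h]
      have hPs : P * s = s := by
        refine Subtype.ext ?_
        show p * (s : H →L[ℂ] H) = (s : H →L[ℂ] H)
        rw [hsvco]
        exact hs2
      have hsP : s * P = s := by
        refine Subtype.ext ?_
        show (s : H →L[ℂ] H) * p = (s : H →L[ℂ] H)
        rw [hsvco]
        exact hs1
      have hCeq : ds = dP * sv + p * ds := by
        conv_lhs => rw [hds_def, ← hPs]
        rw [hδ P s, hsvco, ← hdP_def, ← hds_def]
      have hDeq : ds = ds * p + sv * dP := by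
        conv_lhs => rw [hds_def, ← hsP]
        rw [hδ s P, hsvco, ← hdP_def, ← hds_def]
      -- the key identity for B
      have hAop : B * sv = ds * p + sv * B := by
        ext ξ
        have hk1 : sv * k ξ = k (sv ξ) := by
          ext η
          rw [mul_apply_eq_comp, hkapp, hkapp, map_smul]
        have hmprod : sv * m ξ = m (sv ξ) := by
          calc sv * m ξ = (sv * p) * (k ξ * q) := by rw [hmapp]; noncomm_ring
            _ = (p * sv) * (k ξ * q) := by rw [hs1, hs2]
            _ = p * (sv * k ξ) * q := by noncomm_ring
            _ = p * k (sv ξ) * q := by rw [hk1]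
            _ = m (sv ξ) := (hmapp (sv ξ)).symm
        have hsprod : s * (⟨m ξ, hmS ξ⟩ : S) = ⟨m (sv ξ), hmS (sv ξ)⟩ := by
          refine Subtype.ext ?_
          show (s : H →L[ℂ] H) * m ξ = m (sv ξ)
          rw [hsvco, hmprod]
        have hder' : δ ⟨m (sv ξ), hmS (sv ξ)⟩ = δ s * m ξ + sv * δ ⟨m ξ, hmS ξ⟩ := by
          have hder := hδ s ⟨m ξ, hmS ξ⟩
          rw [hsprod, hsvco] at hder
          exact hder
        have happf := congrArg (fun T : H →L[ℂ] H => T f) hder'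
        simp only [add_apply, mul_apply_eq_comp] at happf
        rw [hmf ξ] at happf
        show B (sv ξ) = (ds * p + sv * B) ξ
        have hr : (ds * p + sv * B) ξ = ds (p ξ) + sv (B ξ) := rfl
        rw [hr, hBapp (sv ξ), hBapp ξ, happf, hds_def]
      -- assembling the commutator identity
      have c1 : q * ds = q * (dP * sv) := by
        conv_lhs => rw [hCeq]
        rw [show q * (dP * sv + p * ds) = q * (dP * sv) + (q * p) * ds from by noncomm_ring,
          hqp, zero_mul, add_zero]
      have c2 : ds * q = sv * (dP * q) := by
        conv_lhs => rw [hDeq]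
        rw [show (ds * p + sv * dP) * q = ds * (p * q) + sv * (dP * q) from by noncomm_ring,
          hpq, mul_zero, zero_add]
      have c3 : p * (ds * p) = p * (B * sv) - sv * (B * p) := by
        have h5 : p * ((B * sv) * p) = p * (ds * p) + sv * (B * p) := by
          rw [hAop, show p * ((ds * p + sv * B) * p) = p * (ds * (p * p)) + (p * sv) * (B * p)
            from by noncomm_ring, hpp, hs2]
        have h6 : p * ((B * sv) * p) = p * (B * sv) := by
          rw [show (B * sv) * p = B * (sv * p) from by noncomm_ring, hs1]
        rw [← h6, h5]
        abel
      have hdec : ds = (p * (B * sv) - sv * (B * p)) + sv * (dP * q) + q * (dP * sv) := by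
        have e0 : ds = p * (ds * p) + p * (ds * q) + q * ds := by
          calc ds = (p + q) * (ds * (p + q)) := by rw [hpq1, one_mul, mul_one]
            _ = p * (ds * p) + p * (ds * q) + q * (ds * (p + q)) := by noncomm_ring
            _ = p * (ds * p) + p * (ds * q) + q * ds := by rw [hpq1, mul_one]
        rw [e0, c3, c1, c2]
        rw [show p * (sv * (dP * q)) = (p * sv) * (dP * q) from by noncomm_ring, hs2]
      have hfinal : b * sv - sv * b = ds := by
        calc b * sv - sv * b
            = (p * B) * (p * sv) + (q * b2) * (q * sv) + (q * dP) * (p * sv)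
                - (p * dP) * (q * sv)
              - ((sv * p) * (B * p) + (sv * q) * (b2 * q) + (sv * q) * (dP * p)
                - (sv * p) * (dP * q)) := by rw [hb_def]; noncomm_ring
          _ = (p * B) * sv + (q * dP) * sv - (sv * (B * p) - sv * (dP * q)) := by
              rw [hs1, hs2, hs3, hs4]
              noncomm_ring
          _ = (p * (B * sv) - sv * (B * p)) + sv * (dP * q) + q * (dP * sv) := by noncomm_ring
          _ = ds := hdec.symm
      rw [← hsv_def]
      exact hfinal.symm
    · -- second identity : δ(q a q) = [b, q a q]
      set t : S := (1 - P) * a * (1 - P) with ht_def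
      obtain ⟨tv, htv_def⟩ : ∃ tv : H →L[ℂ] H, tv = q * av * q := ⟨_, rfl⟩
      have hQco : ((1 - P : S) : H →L[ℂ] H) = q := by
        rw [hq_def]
        push_cast
        rfl
      have htvco : (t : H →L[ℂ] H) = tv := by
        show ((1 - P : S) : H →L[ℂ] H) * (a : H →L[ℂ] H) * ((1 - P : S) : H →L[ℂ] H) = tv
        rw [hQco, htv_def, hav_def]
      set dt : H →L[ℂ] H := δ t with hdt_def
      have ht1 : tv * q = tv := by
        rw [htv_def, show (q * av * q) * q = q * av * (q * q) from by noncomm_ring, hqq]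
      have ht2 : q * tv = tv := by
        rw [htv_def, show q * (q * av * q) = (q * q) * av * q from by noncomm_ring, hqq]
      have ht3 : tv * p = 0 := by
        rw [htv_def, show (q * av * q) * p = q * av * (q * p) from by noncomm_ring, hqp,
          mul_zero]
      have ht4 : p * tv = 0 := by
        rw [htv_def, show p * (q * av * q) = (p * q) * (av * q) from by noncomm_ring, hpq,
          zero_mul]
      have hQQ : (1 - P) * (1 - P) = (1 - P) := by
        refine Subtype.ext ?_
        show ((1 - P : S) : H →L[ℂ] H) * ((1 - P : S) : H →L[ℂ] H) = ((1 - P : S) : H →L[ℂ] H)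
        rw [hQco, hqq]
      have hQt : (1 - P) * t = t := by rw [ht_def, ← mul_assoc, ← mul_assoc, hQQ]
      have htQ : t * (1 - P) = t := by rw [ht_def, mul_assoc, hQQ]
      have hδ1 : δ 1 = 0 := by
        have h := hδ 1 1
        rw [mul_one] at h
        simp only [OneMemClass.coe_one, mul_one, one_mul] at h
        exact (left_eq_add.mp h)
      have hdQ : δ (1 - P) = -dP := by rw [map_sub, hδ1, hdP_def, zero_sub]
      have hCeq' : dt = (-dP) * tv + q * dt := by
        conv_lhs => rw [hdt_def, ← hQt]
        rw [hδ (1 - P) t, htvco, hdQ, hQco, ← hdt_def]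
      have hDeq' : dt = dt * q + tv * (-dP) := by
        conv_lhs => rw [hdt_def, ← htQ]
        rw [hδ t (1 - P), htvco, hdQ, hQco, ← hdt_def]
      have hadjtv_q : q * adjoint tv = adjoint tv := by
        have h := congrArg star ht1
        rw [star_mul, hqstar, star_eq_adjoint] at h
        exact h
      -- the key identity for C / b2
      have hB2op : b2 * tv - tv * b2 = q * dt := by
        have hCt : C * (adjoint tv) = (adjoint tv) * C + (adjoint dt) * q := by
          ext η
          have hk'1 : k' η * tv = k' (adjoint tv η) := by
            ext ζ
            rw [mul_apply_eq_comp, hk'app, hk'app]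
            congr 1
            rw [adjoint_inner_left]
          have hk'q : ∀ ζ, k' ζ * q = k' (q ζ) := by
            intro ζ
            ext ζ'
            rw [mul_apply_eq_comp, hk'app, hk'app]
            congr 1
            conv_rhs => rw [← hqadj]
            rw [adjoint_inner_left]
          have hm'prod : m' η * tv = m' (adjoint tv η) := by
            calc m' η * tv = (p * k' η) * (q * tv) := by rw [hm'app]; noncomm_ring
              _ = (p * k' η) * tv := by rw [ht2]
              _ = p * (k' η * tv) := by noncomm_ring
              _ = p * k' (adjoint tv η) := by rw [hk'1]
              _ = p * (k' (adjoint tv η) * q) := by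
                  rw [hk'q (adjoint tv η),
                    show q (adjoint tv η) = (q * adjoint tv) η from rfl, hadjtv_q]
              _ = m' (adjoint tv η) := by rw [hm'app]; noncomm_ring
          have htprod : (⟨m' η, hm'S η⟩ : S) * t = ⟨m' (adjoint tv η), hm'S (adjoint tv η)⟩ := by
            refine Subtype.ext ?_
            show m' η * (t : H →L[ℂ] H) = m' (adjoint tv η)
            rw [htvco, hm'prod]
          have hder' : δ ⟨m' (adjoint tv η), hm'S (adjoint tv η)⟩
              = δ ⟨m' η, hm'S η⟩ * tv + m' η * dt := by
            have hder := hδ ⟨m' η, hm'S η⟩ t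
            rw [htprod, htvco] at hder
            exact hder
          have hstar := congrArg star hder'
          rw [star_add, star_mul, star_mul] at hstar
          have happe := congrArg (fun T : H →L[ℂ] H => T e) hstar
          simp only [add_apply, mul_apply_eq_comp] at happe
          simp only [star_eq_adjoint] at happe
          rw [hm'adj η] at happe
          show C (adjoint tv η) = ((adjoint tv) * C + (adjoint dt) * q) η
          have hr : ((adjoint tv) * C + (adjoint dt) * q) η
              = adjoint tv (C η) + adjoint dt (q η) := rfl
          rw [hr, hCapp (adjoint tv η), hCapp η]
          exact happe
        have hstar2 := congrArg star hCt
        rw [star_add, star_mul, star_mul, star_mul] at hstar2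
        simp only [star_eq_adjoint, adjoint_adjoint] at hstar2
        rw [hqadj] at hstar2
        -- hstar2 : tv * adjoint C = adjoint C * tv + q * dt
        have h7 : tv * adjoint C - adjoint C * tv = q * dt := by
          rw [hstar2]; abel
        rw [hb2_def, ← h7]
        noncomm_ring
      -- assembling
      have c1' : p * dt = -(p * (dP * tv)) := by
        conv_lhs => rw [hCeq']
        rw [show p * ((-dP) * tv + q * dt) = -(p * (dP * tv)) + (p * q) * dt from by
          noncomm_ring, hpq, zero_mul, add_zero]
      have c2' : dt * p = -(tv * (dP * p)) := by
        conv_lhs => rw [hDeq']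
        rw [show (dt * q + tv * (-dP)) * p = dt * (q * p) + -(tv * (dP * p)) from by
          noncomm_ring, hqp, mul_zero, zero_add]
      have c3' : q * (dt * q) = (q * b2) * tv - tv * (b2 * q) := by
        have h6 : q * ((b2 * tv - tv * b2) * q) = q * ((q * dt) * q) := by rw [hB2op]
        rw [show q * ((b2 * tv - tv * b2) * q) = (q * b2) * (tv * q) - (q * tv) * (b2 * q)
          from by noncomm_ring, ht1, ht2] at h6
        rw [show q * ((q * dt) * q) = (q * q) * (dt * q) from by noncomm_ring, hqq] at h6
        rw [← h6]
      have hdec' : dt = -(p * (dP * tv)) - tv * (dP * p) + ((q * b2) * tv - tv * (b2 * q)) := by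
        have e0' : dt = p * dt + q * (dt * p) + q * (dt * q) := by
          calc dt = (p + q) * (dt * (p + q)) := by rw [hpq1, one_mul, mul_one]
            _ = p * (dt * (p + q)) + q * (dt * p) + q * (dt * q) := by noncomm_ring
            _ = p * dt + q * (dt * p) + q * (dt * q) := by rw [hpq1, mul_one]
        rw [e0', c1', c2', c3']
        rw [show q * -(tv * (dP * p)) = -((q * tv) * (dP * p)) from by noncomm_ring, ht2]
        abel
      have hfinal' : b * tv - tv * b = dt := by
        calc b * tv - tv * b
            = (p * B) * (p * tv) + (q * b2) * (q * tv) + (q * dP) * (p * tv)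
                - (p * dP) * (q * tv)
              - ((tv * p) * (B * p) + (tv * q) * (b2 * q) + (tv * q) * (dP * p)
                - (tv * p) * (dP * q)) := by rw [hb_def]; noncomm_ring
          _ = (q * b2) * tv - (p * dP) * tv - (tv * (b2 * q) + tv * (dP * p)) := by
              rw [ht1, ht2, ht3, ht4]
              noncomm_ring
          _ = -(p * (dP * tv)) - tv * (dP * p) + ((q * b2) * tv - tv * (b2 * q)) := by
              noncomm_ring
          _ = dt := hdec'.symm
      rw [← htv_def]
      exact hfinal'.symm
end
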